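/- arXiv:2510.24110 — 4 statements merged into one kernel-verified Lean document; each statement's English description precedes it below -/
import Mathlib

section
/- Assume the bipartite Bloch data of the context and that ρ is separable. Then for all positive integers p_1, p_2, q_1, q_2 and all real column vectors u ∈ ℝ^{p_1}, v ∈ ℝ^{p_2}, α ∈ ℝ^{q_1}, β ∈ ℝ^{q_2}, the block matrix M = [[u·v^T, u·(β ⊗ T^{(B)})^T], [(α ⊗ T^{(A)})·v^T, (α·β^T) ⊗ T^{(AB)}]] (of size (p_1 + q_1(d_A²−1)) × (p_2 + q_2(d_B²−1)), where ⊗ is the Kronecker product and real vectors are regarded as complex) satisfies ‖M‖_tr ≤ √( (‖u‖_F² + ‖α‖_F²·(d_A²−d_A)/κ_A) · (‖v‖_F² + ‖β‖_F²·(d_B²−d_B)/κ_B) ). -/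
/-!
Write `ρ = ∑ᵢ wᵢ σᵢ ⊗ τᵢ` and expand each pure factor in the orthogonal bases `{I, G_k}`:
`σᵢ = (I + ∑ₖ sᵢₖ G_k) / d_A`, `τᵢ = (I + ∑ₗ tᵢₗ G_l) / d_B`. Comparing coefficients with the
Bloch expansion of `ρ` gives `T^A = ∑ wᵢ sᵢ`, `T^B = ∑ wᵢ tᵢ`, `T^{AB} = ∑ wᵢ sᵢ tᵢᵀ`, so
`M = ∑ᵢ wᵢ xᵢ yᵢᵀ` with `xᵢ = (u, α ⊗ sᵢ)` and `yᵢ = (v, β ⊗ tᵢ)`. Bessel's inequality in the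
Frobenius inner product, together with `tr σᵢ² = 1`, bounds `‖sᵢ‖² ≤ (d_A² - d_A) / κ_A`, hence
`∑ wᵢ ‖xᵢ‖² ≤ X` and `∑ wᵢ ‖yᵢ‖² ≤ Y`, the two factors under the square root.

For `c > 0` the positive semidefinite matrix `∑ᵢ wᵢ zᵢ zᵢᴴ`, `zᵢ = (√c xᵢ, ȳᵢ / √c)`, has
off-diagonal block `M`. A positive semidefinite block matrix `[[P, M], [Mᴴ, Q]]` satisfies
`2 ‖M‖_tr ≤ tr P + tr Q`: test it against `(-U, I)`, where `U` is the partial isometry of the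
polar decomposition `M = U |M|`, and use `tr (Uᴴ P U) ≤ tr P`. This gives
`2 ‖M‖_tr ≤ c X + Y / c` for all `c > 0`, and optimizing over `c` gives `‖M‖_tr ≤ √(X Y)`.
-/

open Matrix ComplexOrder
open scoped Kronecker

/-- The trace norm `‖A‖_tr = Tr((A†A)^{1/2})` of a complex matrix (the sum of its
singular values). -/
noncomputable def traceNorm {m n : Type*} [Fintype m] [Fintype n] [DecidableEq n]
    (A : Matrix m n ℂ) : ℝ :=
  ((Matrix.posSemidef_conjTranspose_mul_self A).1.eigenvectorUnitary.1 *
      diagonal (((↑) : ℝ → ℂ) ∘ (√·) ∘ (Matrix.posSemidef_conjTranspose_mul_self A).1.eigenvalues) *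
      (star (Matrix.posSemidef_conjTranspose_mul_self A).1.eigenvectorUnitary : Matrix n n ℂ)).trace.re

section TraceNorm

variable {m n : Type*} [Fintype m] [Fintype n] [DecidableEq n]

lemma traceNorm_eq_sum_sqrt_eigenvalues (A : Matrix m n ℂ) :
    traceNorm A = ∑ k, √((posSemidef_conjTranspose_mul_self A).1.eigenvalues k) := by
  rw [traceNorm, trace_mul_cycle, Unitary.coe_star_mul_self, Matrix.one_mul, trace_diagonal]
  simp [Complex.re_sum]

lemma exists_partialIsometry_trace_conjTranspose_mul_eq_traceNorm (A : Matrix m n ℂ) :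
    ∃ U : Matrix m n ℂ, U * Uᴴ * U = U ∧ (Uᴴ * A).trace = traceNorm A := by
  set hA := posSemidef_conjTranspose_mul_self A
  set φ := Unitary.conjStarAlgAut ℂ (Matrix n n ℂ) hA.1.eigenvectorUnitary
  set σ : n → ℝ := fun k => √(hA.1.eigenvalues k)
  have hAA : Aᴴ * A = φ (diagonal fun k => ((σ k ^ 2 : ℝ) : ℂ)) := by
    rw [hA.1.spectral_theorem]
    congr 2
    funext k
    simp [σ, Real.sq_sqrt (hA.eigenvalues_nonneg k)]
  set W := φ (diagonal fun k => (((σ k)⁻¹ : ℝ) : ℂ))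
  have hW : Wᴴ = W := by
    rw [← star_eq_conjTranspose, ← map_star, star_eq_conjTranspose, diagonal_conjTranspose]
    simp [W]
  refine ⟨A * W, ?_, ?_⟩
  · have hpointwise (x : ℝ) : x⁻¹ * x⁻¹ * x ^ 2 * x⁻¹ = x⁻¹ := by
      rcases eq_or_ne x 0 with rfl | hx
      · simp
      · field_simp
    rw [conjTranspose_mul, hW,
      show A * W * (W * Aᴴ) * (A * W) = A * (W * W * (Aᴴ * A) * W) by simp only [Matrix.mul_assoc],
      hAA]
    simp only [W, ← map_mul, diagonal_mul_diagonal, ← Complex.ofReal_mul, hpointwise]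
  · have hpointwise (x : ℝ) : x⁻¹ * x ^ 2 = x := by
      rcases eq_or_ne x 0 with rfl | hx
      · simp
      · field_simp
    rw [conjTranspose_mul, hW, Matrix.mul_assoc, hAA, ← map_mul, diagonal_mul_diagonal]
    simp only [← Complex.ofReal_mul, hpointwise, φ, Unitary.conjStarAlgAut_apply, trace_mul_cycle,
      Unitary.coe_star_mul_self, Matrix.one_mul, trace_diagonal, traceNorm_eq_sum_sqrt_eigenvalues]
    simp [σ]

omit [DecidableEq n] in
lemma re_trace_conjTranspose_mul_mul_le {P : Matrix m m ℂ} (hP : P.PosSemidef)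
    {U : Matrix m n ℂ} (hU : U * Uᴴ * U = U) : (Uᴴ * P * U).trace.re ≤ P.trace.re := by
  classical
  set S := 1 - U * Uᴴ
  have hS : Sᴴ = S := by simp [S]
  have hSS : S * S = S := by
    simp only [S, Matrix.sub_mul, Matrix.mul_sub, Matrix.one_mul, Matrix.mul_one,
      ← Matrix.mul_assoc, hU]
    abel
  have hdiff : P.trace - (Uᴴ * P * U).trace = (Sᴴ * P * S).trace := calc
    _ = (S * P).trace := by rw [trace_mul_cycle, Matrix.sub_mul, Matrix.one_mul, trace_sub]
    _ = (Sᴴ * P * S).trace := by rw [hS, trace_mul_cycle, hSS]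
  have h0 := (Complex.nonneg_iff.1 (hP.conjTranspose_mul_mul_same S).trace_nonneg).1
  rw [← hdiff, Complex.sub_re] at h0
  linarith

lemma traceNorm_le_of_posSemidef_fromBlocks {A : Matrix m n ℂ} {P : Matrix m m ℂ}
    {Q : Matrix n n ℂ} (h : (fromBlocks P A Aᴴ Q).PosSemidef) :
    2 * traceNorm A ≤ P.trace.re + Q.trace.re := by
  obtain ⟨U, hU, hUA⟩ := exists_partialIsometry_trace_conjTranspose_mul_eq_traceNorm A
  have hAU : (Aᴴ * U).trace = traceNorm A := by
    rw [show Aᴴ * U = (Uᴴ * A)ᴴ by rw [conjTranspose_mul, conjTranspose_conjTranspose],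
      trace_conjTranspose, hUA]
    exact Complex.conj_ofReal _
  set Z := fromRows (-U) (1 : Matrix n n ℂ)
  have hZ : Zᴴ * fromBlocks P A Aᴴ Q * Z = Uᴴ * P * U - Aᴴ * U - Uᴴ * A + Q := by
    rw [conjTranspose_fromRows_eq_fromCols_conjTranspose, fromCols_mul_fromBlocks,
      fromCols_mul_fromRows]
    simp only [conjTranspose_neg, conjTranspose_one, Matrix.neg_mul, Matrix.one_mul,
      Matrix.mul_neg, Matrix.mul_one, Matrix.add_mul, Matrix.mul_assoc]
    abel
  have h0 := (Complex.nonneg_iff.1 (h.conjTranspose_mul_mul_same Z).trace_nonneg).1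
  rw [hZ, trace_add, trace_sub, trace_sub, hAU, hUA] at h0
  simp only [Complex.add_re, Complex.sub_re, Complex.ofReal_re] at h0
  have hP : P.PosSemidef := h.submatrix Sum.inl
  linarith [re_trace_conjTranspose_mul_mul_le hP hU]

end TraceNorm

lemma le_sqrt_mul_of_forall_two_mul_le {t X Y : ℝ} (hX : 0 ≤ X) (hY : 0 ≤ Y)
    (h : ∀ c : ℝ, 0 < c → 2 * t ≤ c * X + c⁻¹ * Y) : t ≤ √(X * Y) := by
  by_contra! ht
  have ht0 : 0 < t := (Real.sqrt_nonneg _).trans_lt ht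
  have htXY : X * Y < t ^ 2 := (Real.sqrt_lt' ht0).1 ht
  rcases hX.eq_or_lt with rfl | hX
  · have := h ((Y + 1) / t) (by positivity)
    rw [mul_zero, zero_add, inv_div, div_mul_eq_mul_div, le_div_iff₀ (by positivity)] at this
    nlinarith
  · have := h (t / X) (by positivity)
    rw [div_mul_cancel₀ _ hX.ne', inv_div, div_mul_eq_mul_div] at this
    have : X * Y / t < t := by rw [div_lt_iff₀ ht0]; nlinarith
    linarith

section RankOneSum

variable {ι m n : Type*} [Fintype ι] [Fintype m] [Fintype n] [DecidableEq n]

lemma two_mul_traceNorm_sum_smul_vecMulVec_le {w : ι → ℝ} (hw : ∀ i, 0 ≤ w i)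
    (x : ι → m → ℂ) (y : ι → n → ℂ) {c : ℝ} (hc : 0 < c) :
    2 * traceNorm (∑ i, (w i : ℂ) • vecMulVec (x i) (y i)) ≤
      c * ∑ i, w i * ∑ r, ‖x i r‖ ^ 2 + c⁻¹ * ∑ i, w i * ∑ r, ‖y i r‖ ^ 2 := by
  set a : ℂ := ((√c : ℝ) : ℂ)
  set b : ℂ := (((√c)⁻¹ : ℝ) : ℂ)
  have hab : a * b = 1 := by
    simp only [a, b, ← Complex.ofReal_mul, mul_inv_cancel₀ (Real.sqrt_pos.2 hc).ne',
      Complex.ofReal_one]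
  have haa : a * a = c := by
    simp only [a, ← Complex.ofReal_mul, Real.mul_self_sqrt hc.le]
  have hbb : b * b = (c : ℂ)⁻¹ := by
    simp only [b, ← Complex.ofReal_mul, ← mul_inv, Real.mul_self_sqrt hc.le, Complex.ofReal_inv]
  set z : ι → m ⊕ n → ℂ := fun i => Sum.elim (a • x i) (b • star (y i))
  set F := ∑ i, (w i : ℂ) • vecMulVec (z i) (star (z i))
  have hF : F.PosSemidef := posSemidef_sum _ fun i _ =>
    (posSemidef_vecMulVec_self_star (z i)).smul (Complex.zero_le_real.2 (hw i))
  have h12 : F.toBlocks₁₂ = ∑ i, (w i : ℂ) • vecMulVec (x i) (y i) := by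
    ext r s
    simp only [toBlocks₁₂, F, z, of_apply, Matrix.sum_apply, Matrix.smul_apply, vecMulVec_apply]
    refine Finset.sum_congr rfl fun i _ => ?_
    simp only [Sum.elim_inl, Sum.elim_inr, Pi.smul_apply, Pi.star_apply, smul_eq_mul, star_mul',
      b, Complex.star_def, Complex.conj_ofReal, Complex.conj_conj]
    linear_combination (w i * x i r * y i s) * hab
  have h11 : F.toBlocks₁₁.trace = ((c * ∑ i, w i * ∑ r, ‖x i r‖ ^ 2 : ℝ) : ℂ) := by
    simp only [toBlocks₁₁, F, z, trace, diag, of_apply, Matrix.sum_apply, Matrix.smul_apply,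
      vecMulVec_apply]
    rw [Finset.sum_comm]
    push_cast
    simp only [Finset.mul_sum]
    refine Finset.sum_congr rfl fun i _ => Finset.sum_congr rfl fun r _ => ?_
    simp only [Sum.elim_inl, Pi.smul_apply, Pi.star_apply, smul_eq_mul, star_mul',
      a, Complex.star_def, Complex.conj_ofReal, ← Complex.mul_conj']
    linear_combination (w i * x i r * starRingEnd ℂ (x i r)) * haa
  have h22 : F.toBlocks₂₂.trace = ((c⁻¹ * ∑ i, w i * ∑ r, ‖y i r‖ ^ 2 : ℝ) : ℂ) := by
    simp only [toBlocks₂₂, F, z, trace, diag, of_apply, Matrix.sum_apply, Matrix.smul_apply,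
      vecMulVec_apply]
    rw [Finset.sum_comm]
    push_cast
    simp only [Finset.mul_sum]
    refine Finset.sum_congr rfl fun i _ => Finset.sum_congr rfl fun r _ => ?_
    simp only [Sum.elim_inr, Pi.smul_apply, Pi.star_apply, smul_eq_mul, star_mul',
      b, Complex.star_def, Complex.conj_ofReal, Complex.conj_conj, ← Complex.mul_conj']
    linear_combination (w i * starRingEnd ℂ (y i r) * y i r) * hbb
  rw [← fromBlocks_toBlocks F] at hF
  rw [← (isHermitian_fromBlocks_iff.1 hF.1).2.1, h12] at hF
  simpa only [h11, h22, Complex.ofReal_re] using traceNorm_le_of_posSemidef_fromBlocks hF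

lemma traceNorm_sum_smul_vecMulVec_le {w : ι → ℝ} (hw : ∀ i, 0 ≤ w i) (x : ι → m → ℂ)
    (y : ι → n → ℂ) {X Y : ℝ} (hX : ∑ i, w i * ∑ r, ‖x i r‖ ^ 2 ≤ X)
    (hY : ∑ i, w i * ∑ r, ‖y i r‖ ^ 2 ≤ Y) :
    traceNorm (∑ i, (w i : ℂ) • vecMulVec (x i) (y i)) ≤ √(X * Y) := by
  have hnonneg (f : ι → ℝ) (hf : ∀ i, 0 ≤ f i) : 0 ≤ ∑ i, w i * f i :=
    Finset.sum_nonneg fun i _ => mul_nonneg (hw i) (hf i)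
  refine le_sqrt_mul_of_forall_two_mul_le ((hnonneg _ fun _ => by positivity).trans hX)
    ((hnonneg _ fun _ => by positivity).trans hY) fun c hc => ?_
  refine (two_mul_traceNorm_sum_smul_vecMulVec_le hw x y hc).trans ?_
  gcongr

end RankOneSum

section Bloch

variable {n α ι : Type*} [Fintype n]

def IsFrobeniusOrthogonal [DecidableEq α] (E : α → Matrix n n ℂ) (c : α → ℝ) : Prop :=
  ∀ a b, ((E a)ᴴ * E b).trace = if a = b then (c a : ℂ) else 0

lemma inner_toLp_eq_trace_conjTranspose_mul (A B : Matrix n n ℂ) :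
    inner ℂ (WithLp.toLp 2 fun p : n × n => A p.1 p.2) (WithLp.toLp 2 fun p : n × n => B p.1 p.2)
      = (Aᴴ * B).trace := by
  simp only [EuclideanSpace.inner_toLp_toLp, dotProduct, Fintype.sum_prod_type, trace, diag,
    mul_apply, conjTranspose_apply, Pi.star_apply]
  rw [Finset.sum_comm]
  exact Finset.sum_congr rfl fun i _ => Finset.sum_congr rfl fun j _ => mul_comm _ _

/-- Bessel's inequality for the Frobenius inner product. -/
lemma sum_norm_sq_trace_div_le [Fintype α] [DecidableEq α] {E : α → Matrix n n ℂ} {c : α → ℝ}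
    (hE : IsFrobeniusOrthogonal E c) (hc : ∀ a, 0 < c a) (X : Matrix n n ℂ) :
    ∑ a, ‖((E a)ᴴ * X).trace‖ ^ 2 / c a ≤ (Xᴴ * X).trace.re := by
  set e : Matrix n n ℂ → EuclideanSpace ℂ (n × n) := fun A => WithLp.toLp 2 fun p => A p.1 p.2
  have he (A B : Matrix n n ℂ) : inner ℂ (e A) (e B) = (Aᴴ * B).trace :=
    inner_toLp_eq_trace_conjTranspose_mul A B
  set f : α → EuclideanSpace ℂ (n × n) := fun a => (((√(c a))⁻¹ : ℝ) : ℂ) • e (E a)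
  have hf : Orthonormal ℂ f := by
    rw [orthonormal_iff_ite]
    intro a b
    simp only [f, inner_smul_left, inner_smul_right, he, hE a b, Complex.conj_ofReal]
    split_ifs with hab
    · subst hab
      rw [← mul_assoc, ← Complex.ofReal_mul, ← Complex.ofReal_mul, ← mul_inv,
        Real.mul_self_sqrt (hc a).le, inv_mul_cancel₀ (hc a).ne', Complex.ofReal_one]
    · simp
  have hbessel := hf.sum_inner_products_le (e X) (s := Finset.univ)
  have hX : ‖e X‖ ^ 2 = (Xᴴ * X).trace.re := by
    rw [← he, inner_self_eq_norm_sq_to_K]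
    norm_cast
  refine le_of_eq_of_le (Finset.sum_congr rfl fun a _ => ?_) (hX ▸ hbessel)
  simp only [f, inner_smul_left, he, norm_mul, Complex.conj_ofReal, Complex.norm_real, mul_pow]
  rw [Real.norm_of_nonneg (by positivity), inv_pow, Real.sq_sqrt (hc a).le, div_eq_inv_mul]

variable (n) in
def identityScale (κ : ℝ) : Option ι → ℝ := fun a => a.elim (Fintype.card n) fun _ => κ

lemma identityScale_pos [Nonempty n] {κ : ℝ} (hκ : 0 < κ) (a : Option ι) :
    0 < identityScale n κ a := by
  cases a
  exacts [Nat.cast_pos.2 Fintype.card_pos, hκ]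

/-- The coefficients `sₐ` of `X = (1/d) ∑ₐ sₐ • E a`, the normalisation used for Bloch vectors,
for a Frobenius-orthogonal family `E` with squared norms `c`. -/
noncomputable def blochVector (E : α → Matrix n n ℂ) (c : α → ℝ) (X : Matrix n n ℂ) (a : α) :
    ℂ :=
  Fintype.card n / c a * ((E a)ᴴ * X).trace

variable [DecidableEq n]

def withIdentity (G : ι → Matrix n n ℂ) : Option ι → Matrix n n ℂ := fun a => a.elim 1 G

lemma isFrobeniusOrthogonal_withIdentity [DecidableEq ι] {G : ι → Matrix n n ℂ} {κ : ℝ}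
    (hGtr : ∀ k, (G k).trace = 0) (hG : IsFrobeniusOrthogonal G fun _ => κ) :
    IsFrobeniusOrthogonal (withIdentity G) (identityScale n κ) := by
  rintro (_ | k) (_ | l)
  · simp [withIdentity, identityScale]
  · simp [withIdentity, hGtr]
  · simp [withIdentity, trace_conjTranspose, hGtr]
  · simp [withIdentity, identityScale, hG k l]

lemma blochVector_withIdentity_none [Nonempty n] {G : ι → Matrix n n ℂ} {κ : ℝ}
    (X : Matrix n n ℂ) : blochVector (withIdentity G) (identityScale n κ) X none = X.trace := by
  simp [blochVector, withIdentity, identityScale]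

lemma sum_norm_sq_blochVector_le [Fintype ι] [DecidableEq ι] {G : ι → Matrix n n ℂ} {κ : ℝ}
    (hκ : 0 < κ) (hGtr : ∀ k, (G k).trace = 0) (hG : IsFrobeniusOrthogonal G fun _ => κ)
    {σ : Matrix n n ℂ} (hσ : σ.IsHermitian) (hσσ : σ * σ = σ) (hσtr : σ.trace = 1) :
    ∑ k, ‖blochVector G (fun _ => κ) σ k‖ ^ 2 ≤
      ((Fintype.card n : ℝ) ^ 2 - Fintype.card n) / κ := by
  have : Nonempty n := by
    by_contra hn
    simp [not_nonempty_iff.1 hn, trace] at hσtr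
  have hd : 0 < (Fintype.card n : ℝ) := Nat.cast_pos.2 Fintype.card_pos
  have h := sum_norm_sq_trace_div_le (isFrobeniusOrthogonal_withIdentity hGtr hG)
    (identityScale_pos hκ) σ
  simp only [Fintype.sum_option, withIdentity, identityScale, Option.elim_none, Option.elim_some,
    conjTranspose_one, Matrix.one_mul, hσ.eq, hσσ, hσtr, norm_one, one_pow, one_div,
    Complex.one_re] at h
  set d := (Fintype.card n : ℝ)
  have hnorm : ∑ k, ‖blochVector G (fun _ => κ) σ k‖ ^ 2
      = d ^ 2 / κ * ∑ k, ‖((G k)ᴴ * σ).trace‖ ^ 2 / κ := by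
    rw [Finset.mul_sum]
    refine Finset.sum_congr rfl fun k _ => ?_
    rw [blochVector, norm_mul, norm_div, Complex.norm_natCast, Complex.norm_real,
      Real.norm_of_nonneg hκ.le]
    field_simp
    ring
  calc ∑ k, ‖blochVector G (fun _ => κ) σ k‖ ^ 2 ≤ d ^ 2 / κ * (1 - d⁻¹) := by
        rw [hnorm]
        gcongr
        linarith
    _ = (d ^ 2 - d) / κ := by field_simp

end Bloch

lemma eq_sum_mul_blochVector_mul_blochVector {m n α β γ : Type*} [Fintype m] [Fintype n]
    [Nonempty m] [Nonempty n] [Fintype α] [Fintype β] [Fintype γ] [DecidableEq α] [DecidableEq β]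
    {E : α → Matrix m m ℂ} {F : β → Matrix n n ℂ} {cE : α → ℝ} {cF : β → ℝ}
    (hE : IsFrobeniusOrthogonal E cE) (hF : IsFrobeniusOrthogonal F cF)
    (hcE : ∀ a, cE a ≠ 0) (hcF : ∀ b, cF b ≠ 0)
    (T : α → β → ℂ) (w : γ → ℂ) (σ : γ → Matrix m m ℂ) (τ : γ → Matrix n n ℂ)
    (h : ((Fintype.card m : ℂ) * Fintype.card n)⁻¹ • ∑ a, ∑ b, T a b • (E a ⊗ₖ F b) =
      ∑ i, w i • (σ i ⊗ₖ τ i)) (a : α) (b : β) :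
    T a b = ∑ i, w i * (blochVector E cE (σ i) a * blochVector F cF (τ i) b) := by
  have h' := congrArg (fun ρ => (((E a)ᴴ ⊗ₖ (F b)ᴴ) * ρ).trace) h
  simp only [trace_smul, Matrix.mul_sum, trace_sum, mul_smul_comm, ← mul_kronecker_mul,
    trace_kronecker, smul_eq_mul, hE a, hF b, mul_ite, mul_zero, ite_mul, zero_mul,
    Finset.sum_ite_eq, Finset.mem_univ, if_true] at h'
  have hm : (Fintype.card m : ℂ) ≠ 0 := by simp
  have hn : (Fintype.card n : ℂ) ≠ 0 := by simp
  have hcEa : (cE a : ℂ) ≠ 0 := Complex.ofReal_ne_zero.2 (hcE a)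
  have hcFb : (cF b : ℂ) ≠ 0 := Complex.ofReal_ne_zero.2 (hcF b)
  calc T a b = Fintype.card m * Fintype.card n / (cE a * cF b) *
        ∑ i, w i * (((E a)ᴴ * σ i).trace * ((F b)ᴴ * τ i).trace) := by
        rw [← h']
        field_simp
    _ = _ := by
        rw [Finset.mul_sum]
        refine Finset.sum_congr rfl fun i _ => ?_
        simp only [blochVector]
        ring

section CorrelationMatrix

variable {ι ι' p₁ p₂ q₁ q₂ γ : Type*}

def correlationTensor (TA : ι → ℂ) (TB : ι' → ℂ) (TAB : Matrix ι ι' ℂ) :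
    Option ι → Option ι' → ℂ
  | none, none => 1
  | some k, none => TA k
  | none, some l => TB l
  | some k, some l => TAB k l

lemma sum_correlationTensor_smul_kronecker {m n : Type*} [DecidableEq m] [DecidableEq n]
    [Fintype ι] [Fintype ι'] (GA : ι → Matrix m m ℂ) (GB : ι' → Matrix n n ℂ) (TA : ι → ℂ)
    (TB : ι' → ℂ) (TAB : Matrix ι ι' ℂ) :
    ∑ a, ∑ b, correlationTensor TA TB TAB a b • (withIdentity GA a ⊗ₖ withIdentity GB b) =
      (1 : Matrix m m ℂ) ⊗ₖ (1 : Matrix n n ℂ) + ∑ i, TA i • (GA i ⊗ₖ (1 : Matrix n n ℂ))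
        + ∑ j, TB j • ((1 : Matrix m m ℂ) ⊗ₖ GB j) + ∑ i, ∑ j, TAB i j • (GA i ⊗ₖ GB j) := by
  simp only [Fintype.sum_option, withIdentity, correlationTensor, Option.elim, one_smul,
    Finset.sum_add_distrib]
  abel

def correlationMatrix (u : p₁ → ℝ) (v : p₂ → ℝ) (α : q₁ → ℝ) (β : q₂ → ℝ) (TA : ι → ℂ)
    (TB : ι' → ℂ) (TAB : Matrix ι ι' ℂ) : Matrix (p₁ ⊕ q₁ × ι) (p₂ ⊕ q₂ × ι') ℂ :=
  fromBlocks
    (of fun a b => ((u a * v b : ℝ) : ℂ))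
    (of fun a jc => ((u a : ℝ) : ℂ) * (((β jc.1 : ℝ) : ℂ) * TB jc.2))
    (of fun ic b => (((α ic.1 : ℝ) : ℂ) * TA ic.2) * ((v b : ℝ) : ℂ))
    (of fun ic jc => ((α ic.1 * β jc.1 : ℝ) : ℂ) * TAB ic.2 jc.2)

def extendedVector (u : p₁ → ℝ) (α : q₁ → ℝ) (s : ι → ℂ) : p₁ ⊕ q₁ × ι → ℂ :=
  Sum.elim (fun a => u a) fun ak => α ak.1 * s ak.2

lemma sum_norm_sq_extendedVector [Fintype p₁] [Fintype q₁] [Fintype ι] (u : p₁ → ℝ)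
    (α : q₁ → ℝ) (s : ι → ℂ) :
    ∑ r, ‖extendedVector u α s r‖ ^ 2 = ∑ a, u a ^ 2 + (∑ a, α a ^ 2) * ∑ k, ‖s k‖ ^ 2 := by
  simp [extendedVector, Fintype.sum_prod_type, Finset.sum_mul_sum, mul_pow]

lemma sum_mul_sum_norm_sq_extendedVector_le [Fintype p₁] [Fintype q₁] [Fintype ι] [Fintype γ]
    {w : γ → ℝ} (hw0 : ∀ i, 0 ≤ w i) (hw1 : ∑ i, w i = 1) (u : p₁ → ℝ) (α : q₁ → ℝ)
    {s : γ → ι → ℂ} {B : ℝ} (hs : ∀ i, ∑ k, ‖s i k‖ ^ 2 ≤ B) :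
    ∑ i, w i * ∑ r, ‖extendedVector u α (s i) r‖ ^ 2 ≤ ∑ a, u a ^ 2 + (∑ a, α a ^ 2) * B := calc
  _ ≤ ∑ i, w i * (∑ a, u a ^ 2 + (∑ a, α a ^ 2) * B) := by
    gcongr with i
    · exact hw0 i
    · rw [sum_norm_sq_extendedVector]
      gcongr
      exact hs i
  _ = _ := by rw [← Finset.sum_mul, hw1, one_mul]

lemma correlationMatrix_eq_sum_smul_vecMulVec [Fintype γ] {u : p₁ → ℝ} {v : p₂ → ℝ}
    {α : q₁ → ℝ} {β : q₂ → ℝ} {TA : ι → ℂ} {TB : ι' → ℂ} {TAB : Matrix ι ι' ℂ} {w : γ → ℂ}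
    {s : γ → Option ι → ℂ} {t : γ → Option ι' → ℂ} (hs : ∀ i, s i none = 1)
    (ht : ∀ i, t i none = 1)
    (hT : ∀ a b, correlationTensor TA TB TAB a b = ∑ i, w i * (s i a * t i b)) :
    correlationMatrix u v α β TA TB TAB =
      ∑ i, w i • vecMulVec (extendedVector u α (s i ∘ some)) (extendedVector v β (t i ∘ some)) := by
  have hw : ∑ i, w i = 1 := by simpa [correlationTensor, hs, ht] using (hT none none).symm
  have hTA (k : ι) : TA k = ∑ i, w i * s i (some k) := by
    simpa [correlationTensor, ht] using hT (some k) none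
  have hTB (l : ι') : TB l = ∑ i, w i * t i (some l) := by
    simpa [correlationTensor, hs] using hT none (some l)
  have hTAB (k : ι) (l : ι') : TAB k l = ∑ i, w i * (s i (some k) * t i (some l)) :=
    hT (some k) (some l)
  ext (a | ⟨a, k⟩) (b | ⟨b, l⟩) <;>
    simp only [correlationMatrix, extendedVector, fromBlocks_apply₁₁, fromBlocks_apply₁₂,
      fromBlocks_apply₂₁, fromBlocks_apply₂₂, of_apply, Matrix.sum_apply, Matrix.smul_apply,
      vecMulVec_apply, Sum.elim_inl, Sum.elim_inr, Function.comp_apply, smul_eq_mul, hTA, hTB,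
      hTAB, Finset.mul_sum, Finset.sum_mul, Complex.ofReal_mul]
  · rw [← Finset.sum_mul, hw, one_mul]
  all_goals exact Finset.sum_congr rfl fun _ _ => by ring

end CorrelationMatrix

theorem stmt_2_general
    (dA dB : ℕ) (hdA : 1 ≤ dA) (hdB : 1 ≤ dB)
    (κA κB : ℝ) (hκA : 0 < κA) (hκB : 0 < κB)
    (GA : Fin (dA ^ 2 - 1) → Matrix (Fin dA) (Fin dA) ℂ)
    (GB : Fin (dB ^ 2 - 1) → Matrix (Fin dB) (Fin dB) ℂ)
    (hGAtr : ∀ i, (GA i).trace = 0)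
    (hGAorth : ∀ i j, ((GA i)ᴴ * GA j).trace = if i = j then (κA : ℂ) else 0)
    (hGBtr : ∀ i, (GB i).trace = 0)
    (hGBorth : ∀ i j, ((GB i)ᴴ * GB j).trace = if i = j then (κB : ℂ) else 0)
    (ρ : Matrix (Fin dA × Fin dB) (Fin dA × Fin dB) ℂ)
    (TA : Fin (dA ^ 2 - 1) → ℂ) (TB : Fin (dB ^ 2 - 1) → ℂ)
    (TAB : Matrix (Fin (dA ^ 2 - 1)) (Fin (dB ^ 2 - 1)) ℂ)
    (hrep : ρ = (((dA : ℂ) * dB))⁻¹ •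
      ((1 : Matrix (Fin dA) (Fin dA) ℂ) ⊗ₖ (1 : Matrix (Fin dB) (Fin dB) ℂ)
        + ∑ i, TA i • (GA i ⊗ₖ (1 : Matrix (Fin dB) (Fin dB) ℂ))
        + ∑ j, TB j • ((1 : Matrix (Fin dA) (Fin dA) ℂ) ⊗ₖ GB j)
        + ∑ i, ∑ j, TAB i j • (GA i ⊗ₖ GB j)))
    (hsep : ∃ (M : ℕ) (w : Fin M → ℝ)
        (σ : Fin M → Matrix (Fin dA) (Fin dA) ℂ)
        (τ : Fin M → Matrix (Fin dB) (Fin dB) ℂ),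
      (∀ i, 0 ≤ w i) ∧ (∑ i, w i = 1) ∧
      (∀ i, (σ i).PosSemidef ∧ (σ i).trace = 1 ∧ σ i * σ i = σ i) ∧
      (∀ i, (τ i).PosSemidef ∧ (τ i).trace = 1 ∧ τ i * τ i = τ i) ∧
      ρ = ∑ i, (w i : ℂ) • (σ i ⊗ₖ τ i))
    :
    ∀ (p₁ p₂ q₁ q₂ : ℕ), 1 ≤ p₁ → 1 ≤ p₂ → 1 ≤ q₁ → 1 ≤ q₂ →
    ∀ (u : Fin p₁ → ℝ) (v : Fin p₂ → ℝ) (α : Fin q₁ → ℝ) (β : Fin q₂ → ℝ),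
      traceNorm (Matrix.fromBlocks
          (Matrix.of fun a b => ((u a * v b : ℝ) : ℂ))
          (Matrix.of fun (a : Fin p₁) (jc : Fin q₂ × Fin (dB ^ 2 - 1)) =>
            ((u a : ℝ) : ℂ) * (((β jc.1 : ℝ) : ℂ) * TB jc.2))
          (Matrix.of fun (ic : Fin q₁ × Fin (dA ^ 2 - 1)) (b : Fin p₂) =>
            (((α ic.1 : ℝ) : ℂ) * TA ic.2) * ((v b : ℝ) : ℂ))
          (Matrix.of fun (ic : Fin q₁ × Fin (dA ^ 2 - 1)) (jc : Fin q₂ × Fin (dB ^ 2 - 1)) =>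
            ((α ic.1 * β jc.1 : ℝ) : ℂ) * TAB ic.2 jc.2))
        ≤ Real.sqrt ((∑ a, u a ^ 2 + (∑ a, α a ^ 2) * (((dA : ℝ) ^ 2 - dA) / κA)) *
            (∑ b, v b ^ 2 + (∑ b, β b ^ 2) * (((dB : ℝ) ^ 2 - dB) / κB))) := by
  intro p₁ p₂ q₁ q₂ _ _ _ _ u v α β
  obtain ⟨N, w, σ, τ, hw0, hw1, hσ, hτ, hρsep⟩ := hsep
  have : Nonempty (Fin dA) := ⟨⟨0, hdA⟩⟩
  have : Nonempty (Fin dB) := ⟨⟨0, hdB⟩⟩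
  have hT := eq_sum_mul_blochVector_mul_blochVector
    (isFrobeniusOrthogonal_withIdentity hGAtr hGAorth)
    (isFrobeniusOrthogonal_withIdentity hGBtr hGBorth)
    (fun a => (identityScale_pos hκA a).ne') (fun b => (identityScale_pos hκB b).ne')
    (correlationTensor TA TB TAB) (fun i => (w i : ℂ)) σ τ
    (by rw [sum_correlationTensor_smul_kronecker, Fintype.card_fin, Fintype.card_fin, ← hrep,
      hρsep])
  have hM := correlationMatrix_eq_sum_smul_vecMulVec (u := u) (v := v) (α := α) (β := β)
    (fun i => blochVector_withIdentity_none (σ i) ▸ (hσ i).2.1)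
    (fun i => blochVector_withIdentity_none (τ i) ▸ (hτ i).2.1) hT
  change traceNorm (correlationMatrix u v α β TA TB TAB) ≤ _
  have hX := sum_mul_sum_norm_sq_extendedVector_le hw0 hw1 u α fun i =>
    Fintype.card_fin dA ▸
      sum_norm_sq_blochVector_le hκA hGAtr hGAorth (hσ i).1.1 (hσ i).2.2 (hσ i).2.1
  have hY := sum_mul_sum_norm_sq_extendedVector_le hw0 hw1 v β fun i =>
    Fintype.card_fin dB ▸
      sum_norm_sq_blochVector_le hκB hGBtr hGBorth (hτ i).1.1 (hτ i).2.2 (hτ i).2.1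
  rw [hM]
  exact traceNorm_sum_smul_vecMulVec_le hw0 _ _ hX hY

/-- (Theorem 1 of the paper.) If the bipartite state `ρ` is separable,
then for all real vectors `u, v, α, β` the extended correlation tensor
`[[u vᵀ, u (β ⊗ T^{(B)})ᵀ], [(α ⊗ T^{(A)}) vᵀ, (α βᵀ) ⊗ T^{(AB)}]]` has trace norm at most
`√((‖u‖_F² + ‖α‖_F²(d_A²−d_A)/κ_A)·(‖v‖_F² + ‖β‖_F²(d_B²−d_B)/κ_B))`. -/
theorem stmt_2
    (dA dB : ℕ) (hdA : 1 ≤ dA) (hdB : 1 ≤ dB)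
    (κA κB : ℝ) (hκA : 0 < κA) (hκB : 0 < κB)
    (GA : Fin (dA ^ 2 - 1) → Matrix (Fin dA) (Fin dA) ℂ)
    (GB : Fin (dB ^ 2 - 1) → Matrix (Fin dB) (Fin dB) ℂ)
    (hGAtr : ∀ i, (GA i).trace = 0)
    (hGAorth : ∀ i j, ((GA i)ᴴ * GA j).trace = if i = j then (κA : ℂ) else 0)
    (hGBtr : ∀ i, (GB i).trace = 0)
    (hGBorth : ∀ i j, ((GB i)ᴴ * GB j).trace = if i = j then (κB : ℂ) else 0)
    (ρ : Matrix (Fin dA × Fin dB) (Fin dA × Fin dB) ℂ)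
    (hρ : ρ.PosSemidef) (hρtr : ρ.trace = 1)
    (TA : Fin (dA ^ 2 - 1) → ℂ) (TB : Fin (dB ^ 2 - 1) → ℂ)
    (TAB : Matrix (Fin (dA ^ 2 - 1)) (Fin (dB ^ 2 - 1)) ℂ)
    (hrep : ρ = (((dA : ℂ) * dB))⁻¹ •
      ((1 : Matrix (Fin dA) (Fin dA) ℂ) ⊗ₖ (1 : Matrix (Fin dB) (Fin dB) ℂ)
        + ∑ i, TA i • (GA i ⊗ₖ (1 : Matrix (Fin dB) (Fin dB) ℂ))
        + ∑ j, TB j • ((1 : Matrix (Fin dA) (Fin dA) ℂ) ⊗ₖ GB j)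
        + ∑ i, ∑ j, TAB i j • (GA i ⊗ₖ GB j)))
    (hsep : ∃ (M : ℕ) (w : Fin M → ℝ)
        (σ : Fin M → Matrix (Fin dA) (Fin dA) ℂ)
        (τ : Fin M → Matrix (Fin dB) (Fin dB) ℂ),
      (∀ i, 0 ≤ w i) ∧ (∑ i, w i = 1) ∧
      (∀ i, (σ i).PosSemidef ∧ (σ i).trace = 1 ∧ σ i * σ i = σ i) ∧
      (∀ i, (τ i).PosSemidef ∧ (τ i).trace = 1 ∧ τ i * τ i = τ i) ∧
      ρ = ∑ i, (w i : ℂ) • (σ i ⊗ₖ τ i))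
    :
    ∀ (p₁ p₂ q₁ q₂ : ℕ), 1 ≤ p₁ → 1 ≤ p₂ → 1 ≤ q₁ → 1 ≤ q₂ →
    ∀ (u : Fin p₁ → ℝ) (v : Fin p₂ → ℝ) (α : Fin q₁ → ℝ) (β : Fin q₂ → ℝ),
      traceNorm (Matrix.fromBlocks
          (Matrix.of fun a b => ((u a * v b : ℝ) : ℂ))
          (Matrix.of fun (a : Fin p₁) (jc : Fin q₂ × Fin (dB ^ 2 - 1)) =>
            ((u a : ℝ) : ℂ) * (((β jc.1 : ℝ) : ℂ) * TB jc.2))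
          (Matrix.of fun (ic : Fin q₁ × Fin (dA ^ 2 - 1)) (b : Fin p₂) =>
            (((α ic.1 : ℝ) : ℂ) * TA ic.2) * ((v b : ℝ) : ℂ))
          (Matrix.of fun (ic : Fin q₁ × Fin (dA ^ 2 - 1)) (jc : Fin q₂ × Fin (dB ^ 2 - 1)) =>
            ((α ic.1 * β jc.1 : ℝ) : ℂ) * TAB ic.2 jc.2))
        ≤ Real.sqrt ((∑ a, u a ^ 2 + (∑ a, α a ^ 2) * (((dA : ℝ) ^ 2 - dA) / κA)) *
            (∑ b, v b ^ 2 + (∑ b, β b ^ 2) * (((dB : ℝ) ^ 2 - dB) / κB))) :=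
  stmt_2_general dA dB hdA hdB κA κB hκA hκB GA GB hGAtr hGAorth hGBtr hGBorth ρ TA TB TAB hrep hsep
end

section
/- Let N ≥ 2, let 𝒜 = (a_{i_1⋯i_N}) be a complex array with mode sizes D_1,…,D_N, let U^{(p)} be a D'_p × D_p complex matrix for each p ∈ {1,…,N}, and let ℬ = 𝒜 ×_1 U^{(1)} ×_2 ⋯ ×_N U^{(N)}. Then for every 1 ≤ k ≤ N−1, all disjoint index tuples R = (r_1,…,r_k), C = (c_1,…,c_{N−k}) whose union is {1,…,N}, and all n ∈ {1,…,k}, m ∈ {1,…,N−k}: 𝐁_{(R,n;C,m)} = (U^{(r_{n+1})} ⊗ ⋯ ⊗ U^{(r_k)} ⊗ U^{(r_1)} ⊗ ⋯ ⊗ U^{(r_n)}) · 𝐀_{(R,n;C,m)} · (U^{(c_{m+1})} ⊗ ⋯ ⊗ U^{(c_{N−k})} ⊗ U^{(c_1)} ⊗ ⋯ ⊗ U^{(c_m)})^T, where ⊗ is the Kronecker product. -/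
open Matrix

/-- The (0-based) mixed-radix row index of Definition 1 of the paper: for mode sizes
`D : Fin k → ℕ`, reference mode `n` (0-based), and a multi-index `i`, this is
`(∏_{t ≤ n} D t)·∑_{s > n} i_s·(∏_{t > s} D t) + ∑_{s ≤ n} i_s·(∏_{s < t ≤ n} D t)`. -/
def mixIdx {k : ℕ} (D : Fin k → ℕ) (n : ℕ) (i : ∀ s, Fin (D s)) : ℕ :=
  (∏ t ∈ Finset.univ.filter (fun t : Fin k => (t : ℕ) ≤ n), D t) *
      ∑ s ∈ Finset.univ.filter (fun s : Fin k => n < (s : ℕ)),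
        (i s : ℕ) * ∏ t ∈ Finset.univ.filter (fun t : Fin k => s < t), D t
    + ∑ s ∈ Finset.univ.filter (fun s : Fin k => (s : ℕ) ≤ n),
        (i s : ℕ) * ∏ t ∈ Finset.univ.filter (fun t : Fin k => s < t ∧ (t : ℕ) ≤ n), D t

/-- The `n`-mode vectorization of a tensor with mode sizes `D : Fin k → ℕ`: the column
vector of length `∏ D s` whose entry in the row given by the mixed-radix index formula
(with reference mode `n`) is the corresponding entry of the tensor. -/
noncomputable def vecUnfold {k : ℕ} (D : Fin k → ℕ) (n : ℕ)
    (A : (∀ s, Fin (D s)) → ℂ) : Fin (∏ s, D s) → ℂ :=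
  fun x => ∑ i : ∀ s, Fin (D s), if mixIdx D n i = (x : ℕ) then A i else 0

/-- The mixed `(R,n;C,m)`-mode matrix unfolding of an `N`-mode tensor `A` with mode sizes
`D`, where the row modes are `r 0, …, r (k-1)`, the column modes are `c 0, …, c (l-1)`,
and `n`, `m` are the reference modes: the entry in row `mixIdx (D∘r) n (i∘r)` and column
`mixIdx (D∘c) m (i∘c)` is `A i`. -/
noncomputable def unfoldAmbient {N k l : ℕ} (D : Fin N → ℕ)
    (r : Fin k → Fin N) (c : Fin l → Fin N) (n m : ℕ)
    (A : (∀ p, Fin (D p)) → ℂ) :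
    Matrix (Fin (∏ s, D (r s))) (Fin (∏ s, D (c s))) ℂ :=
  Matrix.of fun x y => ∑ i : ∀ p, Fin (D p),
    if mixIdx (fun s => D (r s)) n (fun s => i (r s)) = (x : ℕ) ∧
        mixIdx (fun s => D (c s)) m (fun s => i (c s)) = (y : ℕ) then A i else 0

/-- The Kronecker product `U^{(r (n+1))} ⊗ ⋯ ⊗ U^{(r (k-1))} ⊗ U^{(r 0)} ⊗ ⋯ ⊗ U^{(r n)}`
of a family of matrices, realized on composite indices encoded by the mixed-radix index
map `mixIdx` with reference mode `n` (which orders the factors exactly as above). -/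
noncomputable def kronAlong {k : ℕ} (D' D : Fin k → ℕ) (n : ℕ)
    (U : ∀ s, Matrix (Fin (D' s)) (Fin (D s)) ℂ) :
    Matrix (Fin (∏ s, D' s)) (Fin (∏ s, D s)) ℂ :=
  Matrix.of fun x y => ∑ i' : ∀ s, Fin (D' s), ∑ i : ∀ s, Fin (D s),
    if mixIdx D' n i' = (x : ℕ) ∧ mixIdx D n i = (y : ℕ) then ∏ s, U s (i' s) (i s) else 0

section mix

variable {k : ℕ}

lemma sigma_val (n : ℕ) (hn : n < k) (t : Fin k) :
    ((⟨n, hn⟩ - t : Fin k) : ℕ) = if (t : ℕ) ≤ n then n - t else k + n - t := by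
  have hk : 0 < k := lt_of_le_of_lt (Nat.zero_le n) hn
  have ht := t.isLt
  rw [Fin.sub_def]
  show (k - (t : ℕ) + n) % k = _
  split_ifs with h
  · have h2 : k - (t : ℕ) + n = k + (n - t) := by omega
    rw [h2, Nat.add_mod_left, Nat.mod_eq_of_lt (by omega)]
  · rw [Nat.mod_eq_of_lt (by omega)]; omega

lemma sigma_invol (n : ℕ) (hn : n < k) (t : Fin k) :
    (⟨n, hn⟩ - (⟨n, hn⟩ - t : Fin k) : Fin k) = t := by
  haveI : NeZero k := ⟨by omega⟩
  exact sub_sub_cancel _ _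

lemma sigma_bij (n : ℕ) (hn : n < k) :
    Function.Bijective (fun t : Fin k => (⟨n, hn⟩ - t : Fin k)) :=
  Function.Involutive.bijective (fun t => sigma_invol n hn t)

/-- the ordering comparison for the digit permutation -/
lemma sigma_lt_iff (n : ℕ) (hn : n < k) (s t : Fin k) :
    (⟨n, hn⟩ - t : Fin k) < (⟨n, hn⟩ - s : Fin k) ↔
      (if (s : ℕ) ≤ n then s < t ∧ (t : ℕ) ≤ n else (t : ℕ) ≤ n ∨ s < t) := by
  have hs := s.isLt
  have ht := t.isLt
  rw [Fin.lt_def, sigma_val n hn s, sigma_val n hn t, Fin.lt_def]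
  split_ifs <;> omega

end mix

section mix2
variable {k : ℕ}

lemma prod_castLE (f : Fin k → ℕ) (p : Fin k) :
    ∏ j : Fin (p : ℕ), f (Fin.castLE p.isLt.le j)
      = ∏ t ∈ Finset.univ.filter (fun t : Fin k => t < p), f t := by
  refine Finset.prod_bij (fun j _ => Fin.castLE p.isLt.le j) ?_ ?_ ?_ ?_
  · intro j _
    simp only [Finset.mem_filter, Finset.mem_univ, true_and]
    exact j.isLt
  · intro a _ b _ h
    simpa [Fin.ext_iff] using h
  · intro t ht
    simp only [Finset.mem_filter, Finset.mem_univ, true_and, Fin.lt_def] at ht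
    exact ⟨⟨(t : ℕ), ht⟩, Finset.mem_univ _, rfl⟩
  · intro j _; rfl

end mix2

section mix3
variable {k : ℕ}

lemma mixIdx_eq_finPi (D : Fin k → ℕ) (n : ℕ) (hn : n < k) (i : ∀ s, Fin (D s)) :
    mixIdx D n i
      = (finPiFinEquiv (n := fun p => D (⟨n, hn⟩ - p)) (fun p => i (⟨n, hn⟩ - p)) : ℕ) := by
  rw [finPiFinEquiv_apply]
  -- rewrite the inner products of the RHS
  have h1 : ∀ p : Fin k,
      (∏ j, (fun q => D ((⟨n, hn⟩ : Fin k) - q)) (Fin.castLE p.is_lt.le j))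
        = ∏ t ∈ Finset.univ.filter (fun t : Fin k => t < p), D (⟨n, hn⟩ - t) :=
    fun p => prod_castLE (fun t => D ((⟨n, hn⟩ : Fin k) - t)) p
  simp only [h1]
  -- reindex the sum by the involution
  rw [← Fintype.sum_bijective _ (sigma_bij n hn)
    (fun s => (i ((⟨n, hn⟩ : Fin k) - ((⟨n, hn⟩ : Fin k) - s)) : ℕ) *
      ∏ t ∈ Finset.univ.filter (fun t : Fin k => t < (⟨n, hn⟩ : Fin k) - s),
        D ((⟨n, hn⟩ : Fin k) - t))
    _ (fun s => rfl)]
  have h2 : ∀ s : Fin k,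
      (i ((⟨n, hn⟩ : Fin k) - ((⟨n, hn⟩ : Fin k) - s)) : ℕ) *
        (∏ t ∈ Finset.univ.filter (fun t : Fin k => t < (⟨n, hn⟩ : Fin k) - s),
          D ((⟨n, hn⟩ : Fin k) - t))
      = (i s : ℕ) * ∏ u ∈ Finset.univ.filter
          (fun u : Fin k => ((⟨n, hn⟩ : Fin k) - u) < (⟨n, hn⟩ : Fin k) - s), D u := by
    intro s
    rw [sigma_invol n hn s]
    congr 1
    refine Finset.prod_bij (fun t _ => (⟨n, hn⟩ : Fin k) - t) ?_ ?_ ?_ ?_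
    · intro t ht
      simp only [Finset.mem_filter, Finset.mem_univ, true_and] at ht ⊢
      rwa [sigma_invol n hn t]
    · intro a _ b _ h
      have := congrArg (fun x => (⟨n, hn⟩ : Fin k) - x) h
      simpa [sigma_invol n hn] using this
    · intro u hu
      simp only [Finset.mem_filter, Finset.mem_univ, true_and] at hu ⊢
      exact ⟨(⟨n, hn⟩ : Fin k) - u, by simpa using hu, sigma_invol n hn u⟩
    · intro t _; rfl
  simp only [h2]
  -- now split the sum according to s ≤ n
  rw [← Finset.sum_filter_add_sum_filter_not Finset.univ (fun s : Fin k => (s : ℕ) ≤ n)]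
  rw [mixIdx, add_comm]
  congr 1
  · -- s ≤ n part
    refine Finset.sum_congr rfl ?_
    intro s hs
    simp only [Finset.mem_filter, Finset.mem_univ, true_and] at hs
    congr 1
    refine Finset.prod_congr ?_ (fun _ _ => rfl)
    ext u
    simp only [Finset.mem_filter, Finset.mem_univ, true_and]
    rw [sigma_lt_iff n hn s u, if_pos hs]
  · -- n < s part
    rw [show (Finset.univ.filter fun s : Fin k => n < (s : ℕ))
          = Finset.univ.filter (fun s : Fin k => ¬ (s : ℕ) ≤ n) from by
        ext s; simp [not_le]]
    rw [Finset.mul_sum]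
    refine Finset.sum_congr rfl ?_
    intro s hs
    simp only [Finset.mem_filter, Finset.mem_univ, true_and, not_le] at hs
    have hfil : Finset.univ.filter
          (fun u : Fin k => ((⟨n, hn⟩ : Fin k) - u) < (⟨n, hn⟩ : Fin k) - s)
        = Finset.univ.filter (fun u : Fin k => (u : ℕ) ≤ n)
          ∪ Finset.univ.filter (fun u : Fin k => s < u) := by
      rw [← Finset.filter_or]
      ext u
      simp only [Finset.mem_filter, Finset.mem_univ, true_and]
      rw [sigma_lt_iff n hn s u, if_neg (by omega)]
    rw [hfil, Finset.prod_union]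
    · ring
    · simp only [Finset.disjoint_left, Finset.mem_filter, Finset.mem_univ, true_and,
        Fin.lt_def]
      omega
end mix3

section mix4
variable {k : ℕ}

/-- the digit permutation as an equiv -/
def sigmaPerm (n : ℕ) (hn : n < k) : Fin k ≃ Fin k :=
  Function.Involutive.toPerm _ (fun t => sigma_invol n hn t)

/-- `mixIdx` packaged as an equivalence onto `Fin (∏ s, D s)`. -/
noncomputable def mixEquiv (D : Fin k → ℕ) (n : ℕ) (hn : n < k) :
    (∀ s, Fin (D s)) ≃ Fin (∏ s, D s) :=
  ((Equiv.piCongrLeft' (fun s => Fin (D s)) (sigmaPerm n hn)).trans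
    finPiFinEquiv).trans
    (finCongr (Fintype.prod_bijective _ (sigma_bij n hn) _ _ (fun _ => rfl)))

lemma mixEquiv_val (D : Fin k → ℕ) (n : ℕ) (hn : n < k) (i : ∀ s, Fin (D s)) :
    ((mixEquiv D n hn i) : ℕ) = mixIdx D n i := by
  rw [mixIdx_eq_finPi D n hn i]
  rfl

lemma mix_cond (D : Fin k → ℕ) (n : ℕ) (hn : n < k) (i : ∀ s, Fin (D s))
    (z : Fin (∏ s, D s)) :
    mixIdx D n i = (z : ℕ) ↔ z = mixEquiv D n hn i := by
  rw [← mixEquiv_val D n hn i, Fin.ext_iff, eq_comm]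

end mix4

/-- (Theorem 3 of the paper.) If `ℬ = 𝒜 ×₁ U^{(1)} ×₂ ⋯ ×_N U^{(N)}`,
then `𝐁_{(R,n;C,m)} = (U^{(r_{n+1})} ⊗ ⋯ ⊗ U^{(r_k)} ⊗ U^{(r_1)} ⊗ ⋯ ⊗ U^{(r_n)}) ·
𝐀_{(R,n;C,m)} · (U^{(c_{m+1})} ⊗ ⋯ ⊗ U^{(c_{N−k})} ⊗ U^{(c_1)} ⊗ ⋯ ⊗ U^{(c_m)})ᵀ`. -/
theorem stmt_7 (N k l : ℕ) (hN : 2 ≤ N) (hk : 1 ≤ k) (hl : 1 ≤ l)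
    (D D' : Fin N → ℕ) (U : ∀ p, Matrix (Fin (D' p)) (Fin (D p)) ℂ)
    (A : (∀ p, Fin (D p)) → ℂ)
    (r : Fin k → Fin N) (c : Fin l → Fin N)
    (hb : Function.Bijective (Sum.elim r c))
    (n m : ℕ) (hn : n < k) (hm : m < l) :
    unfoldAmbient D' r c n m (fun i' => ∑ i, A i * ∏ p, U p (i' p) (i p))
      = kronAlong (fun s => D' (r s)) (fun s => D (r s)) n (fun s => U (r s))
          * unfoldAmbient D r c n m A
          * (kronAlong (fun s => D' (c s)) (fun s => D (c s)) m (fun s => U (c s)))ᵀ := by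
  ext x y
  simp only [Matrix.mul_apply, Matrix.transpose_apply, unfoldAmbient, kronAlong,
    Matrix.of_apply]
  simp only [mix_cond _ n hn, mix_cond _ m hm]
  rw [← Equiv.sum_comp (mixEquiv (fun s => D (c s)) m hm)]
  conv_rhs => enter [2, w]; rw [← Equiv.sum_comp (mixEquiv (fun s => D (r s)) n hn)]
  simp only [EmbeddingLike.apply_eq_iff_eq]
  simp only [ite_and, mul_ite, ite_mul, zero_mul, mul_zero, Finset.sum_ite_irrel,
    Finset.sum_const_zero, Finset.sum_ite_eq, Finset.sum_ite_eq', Finset.mem_univ, if_true,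
    Finset.mul_sum, Finset.sum_mul]
  conv_rhs => enter [2, w, 2, h', 2]; rw [Finset.sum_comm]
  simp only [Finset.sum_ite_eq', Finset.mem_univ, if_true, Finset.sum_ite_irrel,
    Finset.sum_const_zero]
  conv_rhs => rw [Finset.sum_comm]
  simp only [Finset.sum_ite_irrel, Finset.sum_const_zero]
  conv_rhs => enter [2, h', 2]; rw [Finset.sum_comm]
  simp only [Finset.sum_ite_eq', Finset.mem_univ, if_true]
  -- swap the i and j' sums on the RHS
  conv_rhs => enter [2, h', 2]; rw [Finset.sum_comm]
  -- reindex the LHS over the row/column split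
  let E : (Fin k ⊕ Fin l) ≃ Fin N := Equiv.ofBijective _ hb
  have hE : ∀ q, E q = Sum.elim r c q := fun q => rfl
  let Φ : (∀ p, Fin (D' p)) ≃ ((∀ s, Fin (D' (r s))) × (∀ s, Fin (D' (c s)))) :=
    ((Equiv.piCongrLeft (fun p => Fin (D' p)) E).symm).trans
      (Equiv.sumPiEquivProdPi (fun q => Fin (D' (Sum.elim r c q))))
  have hΦ : ∀ f : ∀ p, Fin (D' p), Φ f = (fun s => f (r s), fun s => f (c s)) := by
    intro f
    rfl
  have hΦr : ∀ (j' : ∀ s, Fin (D' (r s))) (h' : ∀ s, Fin (D' (c s))) (s : Fin k),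
      Φ.symm (j', h') (r s) = j' s := by
    intro j' h' s
    have h2 := hΦ (Φ.symm (j', h'))
    rw [Equiv.apply_symm_apply] at h2
    exact (congrFun (congrArg Prod.fst h2) s).symm
  have hΦc : ∀ (j' : ∀ s, Fin (D' (r s))) (h' : ∀ s, Fin (D' (c s))) (s : Fin l),
      Φ.symm (j', h') (c s) = h' s := by
    intro j' h' s
    have h2 := hΦ (Φ.symm (j', h'))
    rw [Equiv.apply_symm_apply] at h2
    exact (congrFun (congrArg Prod.snd h2) s).symm
  have hsplit : ∀ (i' : ∀ p, Fin (D' p)) (i : ∀ p, Fin (D p)),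
      ∏ p, U p (i' p) (i p)
        = (∏ s, U (r s) (i' (r s)) (i (r s))) * ∏ s, U (c s) (i' (c s)) (i (c s)) := by
    intro i' i
    rw [← Equiv.prod_comp E (fun p => U p (i' p) (i p)), Fintype.prod_sum_type]
    rfl
  rw [← Equiv.sum_comp Φ.symm, Fintype.sum_prod_type]
  simp only [hsplit, hΦr, hΦc]
  rw [Finset.sum_comm]
  refine Finset.sum_congr rfl fun h' _ => ?_
  by_cases hy : y = mixEquiv (fun s => D' (c s)) m hm h'
  · simp only [if_pos hy]
    refine Finset.sum_congr rfl fun j' _ => ?_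
    by_cases hx : x = mixEquiv (fun s => D' (r s)) n hn j'
    · simp only [if_pos hx]
      refine Finset.sum_congr rfl fun i _ => ?_
      ring
    · simp only [if_neg hx, Finset.sum_const_zero]
  · simp only [if_neg hy, ite_self, Finset.sum_const_zero]
end

section
/- Assume the N-partite Bloch data of the context, let ∅ ≠ L ⊊ {1,…,N} with complement Lᶜ, and suppose ρ is biseparable under the bipartition L|Lᶜ with decomposition ρ[a,b] = Σ_i p_i·σ_i[a|_L, b|_L]·τ_i[a|_{Lᶜ}, b|_{Lᶜ}], where p_i ≥ 0, Σ_i p_i = 1, and σ_i, τ_i are pure density matrices on ⊗_{k∈L}ℂ^{d_k} and ⊗_{k∈Lᶜ}ℂ^{d_k} admitting Bloch expansions with correlation tensors T_i^{σ,(R)} (R ⊆ L) and T_i^{τ,(C)} (C ⊆ Lᶜ). Then for all nonempty R ⊆ L and C ⊆ Lᶜ: (i) T^{(R)} = Σ_i p_i·T_i^{σ,(R)} and T^{(C)} = Σ_i p_i·T_i^{τ,(C)}; (ii) for all reference modes n ∈ {1,…,|R|} and m ∈ {1,…,|C|}, the mixed (R,n;C,m)-mode matrix unfolding of T^{(R∪C)}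 (rows indexed by the modes of R in increasing order, columns by those of C in increasing order, mode k of size d_k²−1) equals Σ_i p_i·vec_n(T_i^{σ,(R)})·vec_m(T_i^{τ,(C)})^T. -/
open Matrix ComplexOrder

noncomputable def unfoldPair {k l : ℕ} (Dr : Fin k → ℕ) (Dc : Fin l → ℕ) (n m : ℕ)
    (A : (∀ s, Fin (Dr s)) → (∀ s, Fin (Dc s)) → ℂ) :
    Matrix (Fin (∏ s, Dr s)) (Fin (∏ s, Dc s)) ℂ :=
  Matrix.of fun x y => ∑ i : ∀ s, Fin (Dr s), ∑ j : ∀ s, Fin (Dc s),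
    if mixIdx Dr n i = (x : ℕ) ∧ mixIdx Dc m j = (y : ℕ) then A i j else 0

/-- The mode sizes of the correlation tensor on the modes of `S` (increasing order). -/
def sizes {N : ℕ} (d : Fin N → ℕ) (S : Finset (Fin N)) : Fin S.card → ℕ :=
  fun s => d ((S.orderIsoOfFin rfl s : Fin N)) ^ 2 - 1

def liftTuple {N : ℕ} (d : Fin N → ℕ) (S : Finset (Fin N))
    (i : ∀ s, Fin (sizes d S s)) {p : Fin N} (hp : p ∈ S) : Fin (d p ^ 2 - 1) :=
  Fin.cast (by simp [sizes]) (i ((S.orderIsoOfFin rfl).symm ⟨p, hp⟩))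

noncomputable def subTensorPos {N : ℕ} (d : Fin N → ℕ)
    (t : (∀ p, Option (Fin (d p ^ 2 - 1))) → ℂ) (S : Finset (Fin N)) :
    (∀ s, Fin (sizes d S s)) → ℂ :=
  fun i => t (fun p => if hp : p ∈ S then some (liftTuple d S i hp) else none)

noncomputable def pairTensorPos {N : ℕ} (d : Fin N → ℕ)
    (t : (∀ p, Option (Fin (d p ^ 2 - 1))) → ℂ) (S S' : Finset (Fin N)) :
    (∀ s, Fin (sizes d S s)) → (∀ s, Fin (sizes d S' s)) → ℂ :=
  fun i j => t (fun p =>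
    if hp : p ∈ S then some (liftTuple d S i hp)
    else if hp' : p ∈ S' then some (liftTuple d S' j hp') else none)

noncomputable def mBound {N : ℕ} (d : Fin N → ℕ) (κ : Fin N → ℝ) (S : Finset (Fin N)) : ℝ :=
  if S.card = 1 then ∑ k ∈ S, (((d k : ℝ)) ^ 2 - d k) / κ k
  else if S.card = 2 ∨ (∏ k ∈ S, (d k : ℝ)) / ((S.sup d : ℕ) : ℝ) ^ 2 < 1 then
    ((∏ k ∈ S, (d k : ℝ)) / ∏ k ∈ S, κ k) *
      ((∏ k ∈ S, (d k : ℝ)) + 1 / ((S.card : ℝ) - 1)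
        - ((∏ k ∈ S, (d k : ℝ)) / ((S.card : ℝ) - 1)) * ∑ k ∈ S, 1 / (d k : ℝ) ^ 2)
  else
    ((∏ k ∈ S, (d k : ℝ)) / ∏ k ∈ S, κ k) *
      ((∏ k ∈ S, (d k : ℝ)) + 2 / ((S.card : ℝ) - 2)
        - ((∏ k ∈ S, (d k : ℝ)) / ((S.card : ℝ) - 2)) * ∑ k ∈ S, 1 / (d k : ℝ) ^ 2)

def bisepUnder {N : ℕ} (d : Fin N → ℕ) (L : Finset (Fin N))
    (ρ : Matrix (∀ p, Fin (d p)) (∀ p, Fin (d p)) ℂ) : Prop :=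
  ∃ (M : ℕ) (w : Fin M → ℝ)
    (σ : Fin M → Matrix (∀ q : {x : Fin N // x ∈ L}, Fin (d q.1))
                        (∀ q : {x : Fin N // x ∈ L}, Fin (d q.1)) ℂ)
    (τ : Fin M → Matrix (∀ q : {x : Fin N // x ∈ Lᶜ}, Fin (d q.1))
                        (∀ q : {x : Fin N // x ∈ Lᶜ}, Fin (d q.1)) ℂ),
    (∀ i, 0 ≤ w i) ∧ (∑ i, w i = 1) ∧
    (∀ i, (σ i).PosSemidef ∧ (σ i).trace = 1 ∧ σ i * σ i = σ i) ∧
    (∀ i, (τ i).PosSemidef ∧ (τ i).trace = 1 ∧ τ i * τ i = τ i) ∧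
    (∀ a b, ρ a b = ∑ i, (w i : ℂ) *
      σ i (fun q => a q.1) (fun q => b q.1) * τ i (fun q => a q.1) (fun q => b q.1))

set_option maxHeartbeats 1000000 in
noncomputable def Fprod {ι : Type*} [Fintype ι] (D : ι → ℕ)
    (Gι : ∀ p, Fin (D p ^ 2 - 1) → Matrix (Fin (D p)) (Fin (D p)) ℂ)
    (j : ∀ p, Option (Fin (D p ^ 2 - 1))) (a b : ∀ p, Fin (D p)) : ℂ :=
  ∏ p, (j p).elim (if a p = b p then (1 : ℂ) else 0) (fun x => Gι p x (a p) (b p))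

noncomputable def cVal {ι : Type*} [Fintype ι] (D : ι → ℕ) (κι : ι → ℝ)
    (j : ∀ p, Option (Fin (D p ^ 2 - 1))) : ℂ :=
  ∏ p, (j p).elim ((D p : ℂ)) (fun _ => (κι p : ℂ))

lemma single_sum {ι : Type*} [Fintype ι] (D : ι → ℕ) (κι : ι → ℝ)
    (Gι : ∀ p, Fin (D p ^ 2 - 1) → Matrix (Fin (D p)) (Fin (D p)) ℂ)
    (hGtr : ∀ p i, (Gι p i).trace = 0)
    (hGorth : ∀ p i j, ((Gι p i)ᴴ * Gι p j).trace = if i = j then (κι p : ℂ) else 0)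
    (p : ι) (o o' : Option (Fin (D p ^ 2 - 1))) :
    (∑ α : Fin (D p), ∑ β : Fin (D p),
      (o.elim (if α = β then (1:ℂ) else 0) fun x => Gι p x α β) *
        star (o'.elim (if α = β then (1:ℂ) else 0) fun x => Gι p x α β))
      = if o = o' then o.elim ((D p : ℂ)) (fun _ => (κι p : ℂ)) else 0 := by
  have htr := hGtr p
  have hor := hGorth p
  simp only [Matrix.trace, Matrix.diag, Matrix.mul_apply, Matrix.conjTranspose_apply] at htr hor
  cases o with
  | none =>
    cases o' with
    | none => simp
    | some x =>
      simp only [Option.elim, ite_mul, one_mul, zero_mul, Finset.sum_ite_eq, Finset.mem_univ,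
        if_true, reduceCtorEq, if_false]
      rw [← star_sum]
      rw [htr x]
      simp
  | some x =>
    cases o' with
    | none =>
      simp only [Option.elim]
      simp_rw [apply_ite (star : ℂ → ℂ), star_one, star_zero, mul_ite, mul_one, mul_zero,
        Finset.sum_ite_eq, Finset.mem_univ, if_true]
      simp [htr x]
    | some x' =>
      have := hor x' x
      rw [Finset.sum_comm] at this
      simp only [Option.elim, Option.some.injEq]
      calc (∑ α : Fin (D p), ∑ β : Fin (D p), Gι p x α β * star (Gι p x' α β))
          = ∑ α : Fin (D p), ∑ β : Fin (D p), star (Gι p x' α β) * Gι p x α β := by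
            simp_rw [mul_comm]
        _ = if x' = x then (κι p : ℂ) else 0 := this
        _ = if x = x' then (κι p : ℂ) else 0 := by simp [eq_comm]

lemma pair_sum {ι : Type*} [Fintype ι] [DecidableEq ι] (D : ι → ℕ) (κι : ι → ℝ)
    (Gι : ∀ p, Fin (D p ^ 2 - 1) → Matrix (Fin (D p)) (Fin (D p)) ℂ)
    (hGtr : ∀ p i, (Gι p i).trace = 0)
    (hGorth : ∀ p i j, ((Gι p i)ᴴ * Gι p j).trace = if i = j then (κι p : ℂ) else 0)
    (j j' : ∀ p, Option (Fin (D p ^ 2 - 1))) :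
    (∑ a : ∀ p, Fin (D p), ∑ b : ∀ p, Fin (D p),
        Fprod D Gι j a b * star (Fprod D Gι j' a b))
      = if j = j' then cVal D κι j else 0 := by
  have hmerge : ∀ a b : ∀ p, Fin (D p),
      Fprod D Gι j a b * star (Fprod D Gι j' a b)
        = ∏ p, (((j p).elim (if a p = b p then (1:ℂ) else 0) fun x => Gι p x (a p) (b p)) *
            star ((j' p).elim (if a p = b p then (1:ℂ) else 0) fun x => Gι p x (a p) (b p))) := by
    intro a b
    rw [Fprod, Fprod, star_prod, Finset.prod_mul_distrib]
  simp_rw [hmerge]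
  have h2 : ∀ a : ∀ p, Fin (D p),
      (∑ b : ∀ p, Fin (D p), ∏ p, (((j p).elim (if a p = b p then (1:ℂ) else 0) fun x => Gι p x (a p) (b p)) *
            star ((j' p).elim (if a p = b p then (1:ℂ) else 0) fun x => Gι p x (a p) (b p))))
      = ∏ p, ∑ β : Fin (D p), (((j p).elim (if a p = β then (1:ℂ) else 0) fun x => Gι p x (a p) β) *
            star ((j' p).elim (if a p = β then (1:ℂ) else 0) fun x => Gι p x (a p) β)) := by
    intro a
    rw [Finset.prod_univ_sum, Fintype.piFinset_univ]
  simp_rw [h2]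
  have h4 := Finset.prod_univ_sum (fun _ : ι => (Finset.univ : Finset (Fin (D _))))
    (fun p α => ∑ β : Fin (D p), (((j p).elim (if α = β then (1:ℂ) else 0) fun x => Gι p x α β) *
            star ((j' p).elim (if α = β then (1:ℂ) else 0) fun x => Gι p x α β)))
  rw [show (Finset.univ : Finset (∀ p, Fin (D p))) = Fintype.piFinset (fun _ => Finset.univ) from
    (Fintype.piFinset_univ).symm, ← h4]
  have h3 : ∀ p : ι, (∑ α : Fin (D p), ∑ β : Fin (D p),
      (((j p).elim (if α = β then (1:ℂ) else 0) fun x => Gι p x α β) *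
            star ((j' p).elim (if α = β then (1:ℂ) else 0) fun x => Gι p x α β)))
      = if j p = j' p then (j p).elim ((D p : ℂ)) (fun _ => (κι p : ℂ)) else 0 :=
    fun p => single_sum D κι Gι hGtr hGorth p (j p) (j' p)
  rw [Finset.prod_congr rfl (fun p _ => h3 p)]
  by_cases hjj : j = j'
  · subst hjj
    simp [cVal]
  · obtain ⟨p, hp⟩ := Function.ne_iff.1 hjj
    rw [if_neg hjj]
    exact Finset.prod_eq_zero (Finset.mem_univ p) (by rw [if_neg hp])

lemma extract {ι : Type*} [Fintype ι] [DecidableEq ι] (D : ι → ℕ) (κι : ι → ℝ)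
    (Gι : ∀ p, Fin (D p ^ 2 - 1) → Matrix (Fin (D p)) (Fin (D p)) ℂ)
    (hGtr : ∀ p i, (Gι p i).trace = 0)
    (hGorth : ∀ p i j, ((Gι p i)ᴴ * Gι p j).trace = if i = j then (κι p : ℂ) else 0)
    (ρι : Matrix (∀ p, Fin (D p)) (∀ p, Fin (D p)) ℂ)
    (tι : (∀ p, Option (Fin (D p ^ 2 - 1))) → ℂ)
    (hrepι : ∀ a b, ρι a b = (∏ p, (D p : ℂ))⁻¹ * ∑ j, tι j * Fprod D Gι j a b)
    (j' : ∀ p, Option (Fin (D p ^ 2 - 1))) :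
    (∑ a, ∑ b, ρι a b * star (Fprod D Gι j' a b))
      = (∏ p, (D p : ℂ))⁻¹ * (tι j' * cVal D κι j') := by
  calc (∑ a, ∑ b, ρι a b * star (Fprod D Gι j' a b))
      = ∑ a, ∑ b, ∑ j, (∏ p, (D p : ℂ))⁻¹ * (tι j * (Fprod D Gι j a b * star (Fprod D Gι j' a b))) := by
        simp_rw [hrepι, Finset.mul_sum, Finset.sum_mul, mul_assoc]
    _ = ∑ a, ∑ j, ∑ b, (∏ p, (D p : ℂ))⁻¹ * (tι j * (Fprod D Gι j a b * star (Fprod D Gι j' a b))) :=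
        Finset.sum_congr rfl fun a _ => Finset.sum_comm
    _ = ∑ j, ∑ a, ∑ b, (∏ p, (D p : ℂ))⁻¹ * (tι j * (Fprod D Gι j a b * star (Fprod D Gι j' a b))) :=
        Finset.sum_comm
    _ = ∑ j, (∏ p, (D p : ℂ))⁻¹ * (tι j * ∑ a, ∑ b, Fprod D Gι j a b * star (Fprod D Gι j' a b)) := by
        simp_rw [← Finset.mul_sum]
    _ = ∑ j, (∏ p, (D p : ℂ))⁻¹ * (tι j * if j = j' then cVal D κι j else 0) := by
        simp_rw [pair_sum D κι Gι hGtr hGorth]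
    _ = (∏ p, (D p : ℂ))⁻¹ * (tι j' * cVal D κι j') := by
        rw [Finset.sum_eq_single j']
        · simp
        · intro b _ hb; simp [hb]
        · intro h; exact absurd (Finset.mem_univ _) h

def splitEquiv {N : ℕ} (d : Fin N → ℕ) (L : Finset (Fin N)) :
    (∀ p : Fin N, Fin (d p)) ≃
      ((∀ q : {x : Fin N // x ∈ L}, Fin (d q.1)) × (∀ q : {x : Fin N // x ∈ Lᶜ}, Fin (d q.1))) where
  toFun a := (fun q => a q.1, fun q => a q.1)
  invFun ab p := if h : p ∈ L then ab.1 ⟨p, h⟩ else ab.2 ⟨p, Finset.mem_compl.2 h⟩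
  left_inv a := by
    funext p
    by_cases h : p ∈ L <;> simp [h]
  right_inv ab := by
    refine Prod.ext ?_ ?_ <;> funext q
    · simp [q.2]
    · have h : ¬ (q.1 ∈ L) := Finset.mem_compl.1 q.2
      simp [h]

lemma prod_split {N : ℕ} (L : Finset (Fin N)) {M : Type*} [CommMonoid M] (g : Fin N → M) :
    ∏ p, g p = (∏ q : {x : Fin N // x ∈ L}, g q.1) * ∏ q : {x : Fin N // x ∈ Lᶜ}, g q.1 := by
  rw [Finset.prod_coe_sort, Finset.prod_coe_sort, Finset.prod_mul_prod_compl]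

lemma sum_split {N : ℕ} (d : Fin N → ℕ) (L : Finset (Fin N))
    (H : (∀ q : {x : Fin N // x ∈ L}, Fin (d q.1)) → (∀ q : {x : Fin N // x ∈ Lᶜ}, Fin (d q.1)) → ℂ) :
    ∑ a : ∀ p, Fin (d p), H (fun q => a q.1) (fun q => a q.1)
      = ∑ aL, ∑ aC, H aL aC := by
  calc ∑ a : ∀ p, Fin (d p), H (fun q => a q.1) (fun q => a q.1)
      = ∑ z : (∀ q : {x : Fin N // x ∈ L}, Fin (d q.1)) × (∀ q : {x : Fin N // x ∈ Lᶜ}, Fin (d q.1)),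
          H z.1 z.2 := Equiv.sum_comp (splitEquiv d L) (fun z => H z.1 z.2)
    _ = ∑ aL, ∑ aC, H aL aC := Fintype.sum_prod_type _

lemma cVal_ne_zero {ι : Type*} [Fintype ι] (D : ι → ℕ) (hD : ∀ p, 1 ≤ D p)
    (κι : ι → ℝ) (hκ : ∀ p, 0 < κι p) (j : ∀ p, Option (Fin (D p ^ 2 - 1))) :
    cVal D κι j ≠ 0 := by
  rw [cVal]
  refine Finset.prod_ne_zero_iff.2 fun p _ => ?_
  cases h : j p with
  | none => exact_mod_cast Nat.cast_ne_zero.2 (by have := hD p; omega)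
  | some x => exact Complex.ofReal_ne_zero.2 (hκ p).ne'

lemma prodD_ne_zero {ι : Type*} [Fintype ι] (D : ι → ℕ) (hD : ∀ p, 1 ≤ D p) :
    (∏ p : ι, (D p : ℂ)) ≠ 0 :=
  Finset.prod_ne_zero_iff.2 fun p _ => Nat.cast_ne_zero.2 (by have := hD p; omega)

lemma sum_swap3 {α β γ : Type*} [Fintype α] [Fintype β] [Fintype γ] (f : α → β → γ → ℂ) :
    ∑ a : α, ∑ b : β, ∑ i : γ, f a b i = ∑ i : γ, ∑ a : α, ∑ b : β, f a b i := by
  calc ∑ a : α, ∑ b : β, ∑ i : γ, f a b i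
      = ∑ a : α, ∑ i : γ, ∑ b : β, f a b i :=
        Finset.sum_congr rfl fun _ _ => Finset.sum_comm
    _ = ∑ i : γ, ∑ a : α, ∑ b : β, f a b i := Finset.sum_comm

lemma key_lemma {N : ℕ} (d : Fin N → ℕ) (hd : ∀ p, 1 ≤ d p) (κ : Fin N → ℝ) (hκ : ∀ p, 0 < κ p)
    (G : ∀ p, Fin (d p ^ 2 - 1) → Matrix (Fin (d p)) (Fin (d p)) ℂ)
    (hGtr : ∀ p i, (G p i).trace = 0)
    (hGorth : ∀ p i j, ((G p i)ᴴ * G p j).trace = if i = j then (κ p : ℂ) else 0)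
    (ρ : Matrix (∀ p, Fin (d p)) (∀ p, Fin (d p)) ℂ)
    (t : (∀ p, Option (Fin (d p ^ 2 - 1))) → ℂ)
    (hrep : ∀ a b, ρ a b = (∏ p, (d p : ℂ))⁻¹ * ∑ j, t j * Fprod d G j a b)
    (L : Finset (Fin N))
    (M : ℕ) (w : Fin M → ℝ)
    (σ : Fin M → Matrix (∀ q : {x : Fin N // x ∈ L}, Fin (d q.1))
                        (∀ q : {x : Fin N // x ∈ L}, Fin (d q.1)) ℂ)
    (τ : Fin M → Matrix (∀ q : {x : Fin N // x ∈ Lᶜ}, Fin (d q.1))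
                        (∀ q : {x : Fin N // x ∈ Lᶜ}, Fin (d q.1)) ℂ)
    (sσ : Fin M → (∀ q : {x : Fin N // x ∈ L}, Option (Fin (d q.1 ^ 2 - 1))) → ℂ)
    (sτ : Fin M → (∀ q : {x : Fin N // x ∈ Lᶜ}, Option (Fin (d q.1 ^ 2 - 1))) → ℂ)
    (hσrep : ∀ i a b, σ i a b = (∏ q : {x : Fin N // x ∈ L}, (d q.1 : ℂ))⁻¹ *
      ∑ j, sσ i j * Fprod (fun q : {x : Fin N // x ∈ L} => d q.1) (fun q => G q.1) j a b)
    (hτrep : ∀ i a b, τ i a b = (∏ q : {x : Fin N // x ∈ Lᶜ}, (d q.1 : ℂ))⁻¹ *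
      ∑ j, sτ i j * Fprod (fun q : {x : Fin N // x ∈ Lᶜ} => d q.1) (fun q => G q.1) j a b)
    (hbisep : ∀ a b, ρ a b = ∑ i, (w i : ℂ) *
      σ i (fun q => a q.1) (fun q => b q.1) * τ i (fun q => a q.1) (fun q => b q.1)) :
    ∀ j : ∀ p, Option (Fin (d p ^ 2 - 1)),
      t j = ∑ i, (w i : ℂ) * (sσ i (fun q => j q.1) * sτ i (fun q => j q.1)) := by
  intro j
  set DL : {x : Fin N // x ∈ L} → ℕ := fun q => d q.1 with hDL
  set DC : {x : Fin N // x ∈ Lᶜ} → ℕ := fun q => d q.1 with hDC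
  set Gsub : (∀ q : {x : Fin N // x ∈ L}, Fin (DL q ^ 2 - 1) → Matrix (Fin (DL q)) (Fin (DL q)) ℂ) :=
    fun q => G q.1 with hGsub
  set Gsub2 : (∀ q : {x : Fin N // x ∈ Lᶜ}, Fin (DC q ^ 2 - 1) → Matrix (Fin (DC q)) (Fin (DC q)) ℂ) :=
    fun q => G q.1 with hGsub2
  set jL : (∀ q : {x : Fin N // x ∈ L}, Option (Fin (DL q ^ 2 - 1))) := fun q => j q.1 with hjL
  set jC : (∀ q : {x : Fin N // x ∈ Lᶜ}, Option (Fin (DC q ^ 2 - 1))) := fun q => j q.1 with hjC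
  have hFsplit : ∀ a b : ∀ p, Fin (d p),
      Fprod d G j a b
        = Fprod DL Gsub jL (fun q => a q.1) (fun q => b q.1)
          * Fprod DC Gsub2 jC (fun q => a q.1) (fun q => b q.1) := fun a b =>
    prod_split L (fun p => (j p).elim (if a p = b p then (1:ℂ) else 0) (fun x => G p x (a p) (b p)))
  have eq1 : (∑ a, ∑ b, ρ a b * star (Fprod d G j a b))
      = (∏ p, (d p : ℂ))⁻¹ * (t j * cVal d κ j) :=
    extract d κ G hGtr hGorth ρ t hrep j
  have extractσ : ∀ i, (∑ aL, ∑ bL, σ i aL bL * star (Fprod DL Gsub jL aL bL))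
      = (∏ q, (DL q : ℂ))⁻¹ * (sσ i jL * cVal DL (fun q => κ q.1) jL) := fun i =>
    extract DL (fun q => κ q.1) Gsub (fun q => hGtr q.1) (fun q => hGorth q.1) (σ i) (sσ i)
      (hσrep i) jL
  have extractτ : ∀ i, (∑ aC, ∑ bC, τ i aC bC * star (Fprod DC Gsub2 jC aC bC))
      = (∏ q, (DC q : ℂ))⁻¹ * (sτ i jC * cVal DC (fun q => κ q.1) jC) := fun i =>
    extract DC (fun q => κ q.1) Gsub2 (fun q => hGtr q.1) (fun q => hGorth q.1) (τ i) (sτ i)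
      (hτrep i) jC
  have eq2 : (∑ a, ∑ b, ρ a b * star (Fprod d G j a b))
      = ∑ i, (w i : ℂ) *
          ((∑ aL, ∑ bL, σ i aL bL * star (Fprod DL Gsub jL aL bL)) *
           (∑ aC, ∑ bC, τ i aC bC * star (Fprod DC Gsub2 jC aC bC))) := by
    calc (∑ a, ∑ b, ρ a b * star (Fprod d G j a b))
        = ∑ a : ∀ p, Fin (d p), ∑ b : ∀ p, Fin (d p), ∑ i : Fin M, (w i : ℂ) *
            ((σ i (fun q => a q.1) (fun q => b q.1)
                * star (Fprod DL Gsub jL (fun q => a q.1) (fun q => b q.1)))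
             * (τ i (fun q => a q.1) (fun q => b q.1)
                * star (Fprod DC Gsub2 jC (fun q => a q.1) (fun q => b q.1)))) := by
          refine Finset.sum_congr rfl fun a _ => Finset.sum_congr rfl fun b _ => ?_
          rw [hbisep, Finset.sum_mul]
          refine Finset.sum_congr rfl fun i _ => ?_
          rw [hFsplit, star_mul']
          ring
      _ = ∑ i : Fin M, ∑ a : ∀ p, Fin (d p), ∑ b : ∀ p, Fin (d p), (w i : ℂ) *
            ((σ i (fun q => a q.1) (fun q => b q.1)
                * star (Fprod DL Gsub jL (fun q => a q.1) (fun q => b q.1)))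
             * (τ i (fun q => a q.1) (fun q => b q.1)
                * star (Fprod DC Gsub2 jC (fun q => a q.1) (fun q => b q.1)))) :=
          sum_swap3 _
      _ = ∑ i, (w i : ℂ) *
          ((∑ aL, ∑ bL, σ i aL bL * star (Fprod DL Gsub jL aL bL)) *
           (∑ aC, ∑ bC, τ i aC bC * star (Fprod DC Gsub2 jC aC bC))) := by
          refine Finset.sum_congr rfl fun i _ => ?_
          simp_rw [← Finset.mul_sum]
          congr 1
          calc (∑ a : ∀ p, Fin (d p), ∑ b : ∀ p, Fin (d p),
                (σ i (fun q => a q.1) (fun q => b q.1)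
                  * star (Fprod DL Gsub jL (fun q => a q.1) (fun q => b q.1)))
                * (τ i (fun q => a q.1) (fun q => b q.1)
                  * star (Fprod DC Gsub2 jC (fun q => a q.1) (fun q => b q.1))))
              = ∑ a : ∀ p, Fin (d p), ∑ bL, ∑ bC,
                (σ i (fun q => a q.1) bL * star (Fprod DL Gsub jL (fun q => a q.1) bL))
                * (τ i (fun q => a q.1) bC * star (Fprod DC Gsub2 jC (fun q => a q.1) bC)) :=
                Finset.sum_congr rfl fun a _ => sum_split d L (fun bL bC =>
                  (σ i (fun q => a q.1) bL * star (Fprod DL Gsub jL (fun q => a q.1) bL))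
                  * (τ i (fun q => a q.1) bC * star (Fprod DC Gsub2 jC (fun q => a q.1) bC)))
            _ = ∑ aL, ∑ aC, ∑ bL, ∑ bC,
                (σ i aL bL * star (Fprod DL Gsub jL aL bL))
                * (τ i aC bC * star (Fprod DC Gsub2 jC aC bC)) :=
                sum_split d L (fun aL aC => ∑ bL, ∑ bC,
                  (σ i aL bL * star (Fprod DL Gsub jL aL bL))
                  * (τ i aC bC * star (Fprod DC Gsub2 jC aC bC)))
            _ = ∑ aL, ∑ bL, ∑ aC, ∑ bC,
                (σ i aL bL * star (Fprod DL Gsub jL aL bL))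
                * (τ i aC bC * star (Fprod DC Gsub2 jC aC bC)) :=
                Finset.sum_congr rfl fun aL _ => Finset.sum_comm
            _ = (∑ aL, ∑ bL, σ i aL bL * star (Fprod DL Gsub jL aL bL)) *
                (∑ aC, ∑ bC, τ i aC bC * star (Fprod DC Gsub2 jC aC bC)) := by
                simp_rw [← Finset.mul_sum]
                simp_rw [← Finset.sum_mul]
  set KL : ℂ := (∏ q, (DL q : ℂ))⁻¹ * cVal DL (fun q => κ q.1) jL with hKL
  set KC : ℂ := (∏ q, (DC q : ℂ))⁻¹ * cVal DC (fun q => κ q.1) jC with hKC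
  have hKLne : KL ≠ 0 := mul_ne_zero (inv_ne_zero (prodD_ne_zero DL (fun q => hd q.1)))
    (cVal_ne_zero DL (fun q => hd q.1) (fun q => κ q.1) (fun q => hκ q.1) jL)
  have hKCne : KC ≠ 0 := mul_ne_zero (inv_ne_zero (prodD_ne_zero DC (fun q => hd q.1)))
    (cVal_ne_zero DC (fun q => hd q.1) (fun q => κ q.1) (fun q => hκ q.1) jC)
  have hdsplit : (∏ p, (d p : ℂ)) = (∏ q, (DL q : ℂ)) * (∏ q, (DC q : ℂ)) :=
    prod_split L (fun p => (d p : ℂ))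
  have hcsplit : cVal d κ j = cVal DL (fun q => κ q.1) jL * cVal DC (fun q => κ q.1) jC :=
    prod_split L (fun p => (j p).elim ((d p : ℂ)) (fun _ => (κ p : ℂ)))
  have final : (KL * KC) * t j = (KL * KC) * ∑ i, (w i : ℂ) * (sσ i jL * sτ i jC) := by
    calc (KL * KC) * t j
        = (∏ p, (d p : ℂ))⁻¹ * (t j * cVal d κ j) := by
          rw [hdsplit, hcsplit, hKL, hKC, mul_inv]; ring
      _ = ∑ i, (w i : ℂ) *
          ((∑ aL, ∑ bL, σ i aL bL * star (Fprod DL Gsub jL aL bL)) *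
           (∑ aC, ∑ bC, τ i aC bC * star (Fprod DC Gsub2 jC aC bC))) := eq1.symm.trans eq2
      _ = ∑ i, (w i : ℂ) * ((KL * sσ i jL) * (KC * sτ i jC)) := by
          refine Finset.sum_congr rfl fun i _ => ?_
          rw [extractσ i, extractτ i, hKL, hKC]
          ring
      _ = (KL * KC) * ∑ i, (w i : ℂ) * (sσ i jL * sτ i jC) := by
          rw [Finset.mul_sum]
          exact Finset.sum_congr rfl fun i _ => by ring
  exact mul_left_cancel₀ (mul_ne_zero hKLne hKCne) final

/-- (Lemma (biseparability) of the paper.) If `ρ` is biseparable under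
the bipartition `L|Lᶜ` with pure factors `σᵢ, τᵢ` having Bloch coefficients `sσᵢ, sτᵢ`,
then (i) the correlation tensors of `ρ` on modes `R ⊆ L` and `C ⊆ Lᶜ` are the convex
combinations of those of the factors, and (ii) the mixed `(R,n;C,m)`-mode matrix
unfolding of `T^{(R∪C)}` equals `∑ᵢ pᵢ vec_n(Tᵢ^{σ,(R)}) vec_m(Tᵢ^{τ,(C)})ᵀ`. -/
theorem stmt_11 (N : ℕ)
    (d : Fin N → ℕ) (hd : ∀ p, 1 ≤ d p) (κ : Fin N → ℝ) (hκ : ∀ p, 0 < κ p)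
    (G : ∀ p, Fin (d p ^ 2 - 1) → Matrix (Fin (d p)) (Fin (d p)) ℂ)
    (hGtr : ∀ p i, (G p i).trace = 0)
    (hGorth : ∀ p i j, ((G p i)ᴴ * G p j).trace = if i = j then (κ p : ℂ) else 0)
    (ρ : Matrix (∀ p, Fin (d p)) (∀ p, Fin (d p)) ℂ)
    (hρ : ρ.PosSemidef) (hρtr : ρ.trace = 1)
    (t : (∀ p, Option (Fin (d p ^ 2 - 1))) → ℂ)
    (ht0 : t (fun _ => none) = 1)
    (hrep : ∀ a b, ρ a b = (∏ p, (d p : ℂ))⁻¹ *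
      ∑ j : ∀ p, Option (Fin (d p ^ 2 - 1)), t j *
        ∏ p, (j p).elim (if a p = b p then (1 : ℂ) else 0) (fun x => G p x (a p) (b p)))
    (L : Finset (Fin N)) (hL1 : L.Nonempty) (hL2 : L ≠ Finset.univ)
    (M : ℕ) (w : Fin M → ℝ) (hw : ∀ i, 0 ≤ w i) (hw1 : ∑ i, w i = 1)
    (σ : Fin M → Matrix (∀ q : {x : Fin N // x ∈ L}, Fin (d q.1))
                        (∀ q : {x : Fin N // x ∈ L}, Fin (d q.1)) ℂ)
    (τ : Fin M → Matrix (∀ q : {x : Fin N // x ∈ Lᶜ}, Fin (d q.1))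
                        (∀ q : {x : Fin N // x ∈ Lᶜ}, Fin (d q.1)) ℂ)
    (hσ : ∀ i, (σ i).PosSemidef ∧ (σ i).trace = 1 ∧ σ i * σ i = σ i)
    (hτ : ∀ i, (τ i).PosSemidef ∧ (τ i).trace = 1 ∧ τ i * τ i = τ i)
    (sσ : Fin M → (∀ q : {x : Fin N // x ∈ L}, Option (Fin (d q.1 ^ 2 - 1))) → ℂ)
    (sτ : Fin M → (∀ q : {x : Fin N // x ∈ Lᶜ}, Option (Fin (d q.1 ^ 2 - 1))) → ℂ)
    (hsσ0 : ∀ i, sσ i (fun _ => none) = 1)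
    (hsτ0 : ∀ i, sτ i (fun _ => none) = 1)
    (hσrep : ∀ i a b, σ i a b = (∏ q : {x : Fin N // x ∈ L}, (d q.1 : ℂ))⁻¹ *
      ∑ j : ∀ q : {x : Fin N // x ∈ L}, Option (Fin (d q.1 ^ 2 - 1)), sσ i j *
        ∏ q, (j q).elim (if a q = b q then (1 : ℂ) else 0) (fun x => G q.1 x (a q) (b q)))
    (hτrep : ∀ i a b, τ i a b = (∏ q : {x : Fin N // x ∈ Lᶜ}, (d q.1 : ℂ))⁻¹ *
      ∑ j : ∀ q : {x : Fin N // x ∈ Lᶜ}, Option (Fin (d q.1 ^ 2 - 1)), sτ i j *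
        ∏ q, (j q).elim (if a q = b q then (1 : ℂ) else 0) (fun x => G q.1 x (a q) (b q)))
    (hbisep : ∀ a b, ρ a b = ∑ i, (w i : ℂ) *
      σ i (fun q => a q.1) (fun q => b q.1) * τ i (fun q => a q.1) (fun q => b q.1)) :
    (∀ R : Finset (Fin N), R.Nonempty → R ⊆ L →
      ∀ idx : ∀ p, Fin (d p ^ 2 - 1),
        t (fun p => if p ∈ R then some (idx p) else none)
          = ∑ i, (w i : ℂ) *
              sσ i (fun q => if (q.1 : Fin N) ∈ R then some (idx q.1) else none)) ∧
    (∀ C : Finset (Fin N), C.Nonempty → C ⊆ Lᶜ →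
      ∀ idx : ∀ p, Fin (d p ^ 2 - 1),
        t (fun p => if p ∈ C then some (idx p) else none)
          = ∑ i, (w i : ℂ) *
              sτ i (fun q => if (q.1 : Fin N) ∈ C then some (idx q.1) else none)) ∧
    (∀ R C : Finset (Fin N), R.Nonempty → C.Nonempty → R ⊆ L → C ⊆ Lᶜ →
      ∀ n m : ℕ, n < R.card → m < C.card →
      ∀ x y,
        unfoldPair (sizes d R) (sizes d C) n m (pairTensorPos d t R C) x y
          = ∑ i, (w i : ℂ)
              * vecUnfold (sizes d R) n
                  (fun iv => sσ i (fun q =>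
                    if hq : (q.1 : Fin N) ∈ R then some (liftTuple d R iv hq) else none)) x
              * vecUnfold (sizes d C) m
                  (fun jv => sτ i (fun q =>
                    if hq : (q.1 : Fin N) ∈ C then some (liftTuple d C jv hq) else none)) y) := by
  
  have key := key_lemma d hd κ hκ G hGtr hGorth ρ t hrep L M w σ τ sσ sτ hσrep hτrep hbisep
  refine ⟨?_, ?_, ?_⟩
  · intro R hRne hRL idx
    rw [key (fun p => if p ∈ R then some (idx p) else none)]
    refine Finset.sum_congr rfl fun i _ => ?_
    have hτ1 : sτ i (fun q : {x : Fin N // x ∈ Lᶜ} =>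
        if (q.1 : Fin N) ∈ R then some (idx q.1) else none) = 1 := by
      rw [show (fun q : {x : Fin N // x ∈ Lᶜ} =>
          if (q.1 : Fin N) ∈ R then some (idx q.1) else none)
          = (fun _ => none) from funext fun q => if_neg fun h =>
            (Finset.mem_compl.1 q.2) (hRL h)]
      exact hsτ0 i
    rw [hτ1, mul_one]
  · intro C hCne hCL idx
    rw [key (fun p => if p ∈ C then some (idx p) else none)]
    refine Finset.sum_congr rfl fun i _ => ?_
    have hσ1 : sσ i (fun q : {x : Fin N // x ∈ L} =>
        if (q.1 : Fin N) ∈ C then some (idx q.1) else none) = 1 := by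
      rw [show (fun q : {x : Fin N // x ∈ L} =>
          if (q.1 : Fin N) ∈ C then some (idx q.1) else none)
          = (fun _ => none) from funext fun q => if_neg fun h =>
            (Finset.mem_compl.1 (hCL h)) q.2]
      exact hsσ0 i
    rw [hσ1, one_mul]
  · intro R C hRne hCne hRL hCL n m hn hm x y
    have hterm : ∀ (iv : ∀ s, Fin (sizes d R s)) (jv : ∀ s, Fin (sizes d C s)),
        (if mixIdx (sizes d R) n iv = (x : ℕ) ∧ mixIdx (sizes d C) m jv = (y : ℕ)
          then pairTensorPos d t R C iv jv else 0)
        = ∑ i, (w i : ℂ) *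
            ((if mixIdx (sizes d R) n iv = (x : ℕ) then sσ i (fun q =>
                if hq : (q.1 : Fin N) ∈ R then some (liftTuple d R iv hq) else none) else 0) *
             (if mixIdx (sizes d C) m jv = (y : ℕ) then sτ i (fun q =>
                if hq : (q.1 : Fin N) ∈ C then some (liftTuple d C jv hq) else none) else 0)) := by
      intro iv jv
      by_cases hA : mixIdx (sizes d R) n iv = (x : ℕ)
      · by_cases hB : mixIdx (sizes d C) m jv = (y : ℕ)
        · rw [if_pos ⟨hA, hB⟩]
          simp only [if_pos hA, if_pos hB]
          have hargσ : (fun q : {x : Fin N // x ∈ L} =>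
              if hp : (q.1 : Fin N) ∈ R then some (liftTuple d R iv hp)
              else if hp' : (q.1 : Fin N) ∈ C then some (liftTuple d C jv hp') else none)
              = (fun q : {x : Fin N // x ∈ L} =>
                if hq : (q.1 : Fin N) ∈ R then some (liftTuple d R iv hq) else none) := by
            funext q
            by_cases hq : (q.1 : Fin N) ∈ R
            · simp only [dif_pos hq]
            · have hc : (q.1 : Fin N) ∉ C := fun h => (Finset.mem_compl.1 (hCL h)) q.2
              simp only [dif_neg hq, dif_neg hc]
          have hargτ : (fun q : {x : Fin N // x ∈ Lᶜ} =>
              if hp : (q.1 : Fin N) ∈ R then some (liftTuple d R iv hp)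
              else if hp' : (q.1 : Fin N) ∈ C then some (liftTuple d C jv hp') else none)
              = (fun q : {x : Fin N // x ∈ Lᶜ} =>
                if hq : (q.1 : Fin N) ∈ C then some (liftTuple d C jv hq) else none) := by
            funext q
            have hr : (q.1 : Fin N) ∉ R := fun h => (Finset.mem_compl.1 q.2) (hRL h)
            simp only [dif_neg hr]
          calc pairTensorPos d t R C iv jv
              = ∑ i, (w i : ℂ) *
                  (sσ i (fun q : {x : Fin N // x ∈ L} =>
                    if hp : (q.1 : Fin N) ∈ R then some (liftTuple d R iv hp)
                    else if hp' : (q.1 : Fin N) ∈ C then some (liftTuple d C jv hp') else none) *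
                   sτ i (fun q : {x : Fin N // x ∈ Lᶜ} =>
                    if hp : (q.1 : Fin N) ∈ R then some (liftTuple d R iv hp)
                    else if hp' : (q.1 : Fin N) ∈ C then some (liftTuple d C jv hp') else none)) :=
                key _
            _ = ∑ i, (w i : ℂ) *
                  (sσ i (fun q => if hq : (q.1 : Fin N) ∈ R then some (liftTuple d R iv hq) else none) *
                   sτ i (fun q => if hq : (q.1 : Fin N) ∈ C then some (liftTuple d C jv hq) else none)) := by
                rw [hargσ, hargτ]
        · simp [hB]
      · simp [hA]
    simp only [unfoldPair, vecUnfold, Matrix.of_apply]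
    calc (∑ iv : ∀ s, Fin (sizes d R s), ∑ jv : ∀ s, Fin (sizes d C s),
          if mixIdx (sizes d R) n iv = (x : ℕ) ∧ mixIdx (sizes d C) m jv = (y : ℕ)
            then pairTensorPos d t R C iv jv else 0)
        = ∑ iv : ∀ s, Fin (sizes d R s), ∑ jv : ∀ s, Fin (sizes d C s), ∑ i : Fin M,
            (w i : ℂ) *
            ((if mixIdx (sizes d R) n iv = (x : ℕ) then sσ i (fun q =>
                if hq : (q.1 : Fin N) ∈ R then some (liftTuple d R iv hq) else none) else 0) *
             (if mixIdx (sizes d C) m jv = (y : ℕ) then sτ i (fun q =>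
                if hq : (q.1 : Fin N) ∈ C then some (liftTuple d C jv hq) else none) else 0)) :=
          Finset.sum_congr rfl fun iv _ => Finset.sum_congr rfl fun jv _ => hterm iv jv
      _ = ∑ i : Fin M, ∑ iv : ∀ s, Fin (sizes d R s), ∑ jv : ∀ s, Fin (sizes d C s),
            (w i : ℂ) *
            ((if mixIdx (sizes d R) n iv = (x : ℕ) then sσ i (fun q =>
                if hq : (q.1 : Fin N) ∈ R then some (liftTuple d R iv hq) else none) else 0) *
             (if mixIdx (sizes d C) m jv = (y : ℕ) then sτ i (fun q =>
                if hq : (q.1 : Fin N) ∈ C then some (liftTuple d C jv hq) else none) else 0)) :=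
          sum_swap3 _
      _ = ∑ i : Fin M, (w i : ℂ) *
            ((∑ iv : ∀ s, Fin (sizes d R s), if mixIdx (sizes d R) n iv = (x : ℕ) then sσ i (fun q =>
                if hq : (q.1 : Fin N) ∈ R then some (liftTuple d R iv hq) else none) else 0) *
             (∑ jv : ∀ s, Fin (sizes d C s), if mixIdx (sizes d C) m jv = (y : ℕ) then sτ i (fun q =>
                if hq : (q.1 : Fin N) ∈ C then some (liftTuple d C jv hq) else none) else 0)) := by
          refine Finset.sum_congr rfl fun i _ => ?_
          simp_rw [← Finset.mul_sum, ← Finset.sum_mul]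
      _ = ∑ i : Fin M, (w i : ℂ) *
            (∑ iv : ∀ s, Fin (sizes d R s), if mixIdx (sizes d R) n iv = (x : ℕ) then sσ i (fun q =>
                if hq : (q.1 : Fin N) ∈ R then some (liftTuple d R iv hq) else none) else 0) *
            (∑ jv : ∀ s, Fin (sizes d C s), if mixIdx (sizes d C) m jv = (y : ℕ) then sτ i (fun q =>
                if hq : (q.1 : Fin N) ∈ C then some (liftTuple d C jv hq) else none) else 0) :=
          Finset.sum_congr rfl fun i _ => (mul_assoc _ _ _).symm
end

section
/- Let N ≥ 3 be an integer and let d_1, …, d_N ≥ 1 be real numbers such that ∏_{i=1}^N d_i ≥ d_j² for every j (i.e., ∏_i d_i ≥ (max_i d_i)²). Write P = ∏_{i=1}^N d_i and S = Σ_{i=1}^N 1/d_i². Then P + 2/(N−2) − (P/(N−2))·S ≤ (P·(N−1−S) + 1)/(N−1). (This shows the paper's multipartite Frobenius-norm bound on the correlation tensor, with κ_i = d_i, is at least as sharp as Zhao–Zhang–Jing–Fei's bound under the generalized Pauli basis.) -/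
/-- For `N ≥ 3` and reals `d₁,…,d_N ≥ 1` with `∏ dᵢ ≥ d_j²` for every `j`,
writing `P = ∏ dᵢ` and `S = ∑ 1/dᵢ²`, the paper's multipartite bound
`P + 2/(N−2) − (P/(N−2))·S` is at most Zhao et al.'s bound `(P(N−1−S)+1)/(N−1)`. -/
theorem stmt_17 (N : ℕ) (hN : 3 ≤ N) (d : Fin N → ℝ) (hd : ∀ i, 1 ≤ d i)
    (hP : ∀ j, d j ^ 2 ≤ ∏ i, d i) :
    (∏ i, d i) + 2 / ((N : ℝ) - 2) - ((∏ i, d i) / ((N : ℝ) - 2)) * (∑ i, 1 / d i ^ 2)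
      ≤ ((∏ i, d i) * ((N : ℝ) - 1 - ∑ i, 1 / d i ^ 2) + 1) / ((N : ℝ) - 1) := by
  have hN3 : (3:ℝ) ≤ (N:ℝ) := by exact_mod_cast hN
  have h2 : (0:ℝ) < (N:ℝ) - 2 := by linarith
  have h1 : (0:ℝ) < (N:ℝ) - 1 := by linarith
  have hPS : (N:ℝ) ≤ (∏ i, d i) * (∑ i, 1 / d i ^ 2) := by
    rw [Finset.mul_sum]
    calc (N:ℝ) = ∑ _i : Fin N, (1:ℝ) := by simp
      _ ≤ ∑ i, (∏ i, d i) * (1 / d i ^ 2) := by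
          apply Finset.sum_le_sum
          intro i _
          have hdi : (0:ℝ) < d i ^ 2 := by
            have := hd i; positivity
          rw [mul_one_div, le_div_iff₀ hdi]
          simpa using hP i
  set P := ∏ i, d i with hPdef
  set S := ∑ i, 1 / d i ^ 2 with hSdef
  have hL : P + 2 / ((N:ℝ) - 2) - P / ((N:ℝ) - 2) * S
      = (P * ((N:ℝ) - 2) + 2 - P * S) / ((N:ℝ) - 2) := by
    field_simp
  rw [hL, div_le_div_iff₀ h2 h1]
  nlinarith [hPS]
end
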